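/- arXiv:2508.20648 — 8 statements merged into one kernel-verified Lean document; each statement's English description precedes it below -/
import Mathlib

section
/- Let s and d be positive integers with s ≤ d/2 and d even. Then n(d-s, d) ≥ Σ_{i=0}^{d/2 - s} C(d-s, i) + Σ_{k=1}^{s-1} 2^k · C(d-s, d/2 - s + k) + 2^s · Σ_{i=d/2}^{d-s} C(d-s, i), where C(n,i) denotes the binomial coefficient. -/
/-- Strings of length `d` over the alphabet `S = {0,1,*}`; `none` is the joker `*`. -/
abbrev JString (d : ℕ) := Fin d → Option Bool

/-- The distance between two strings over `{0,1,*}`: the number of positions where both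
entries are binary digits and they differ. -/
def jDist {d : ℕ} (u v : JString d) : ℕ :=
  (Finset.univ.filter fun i => ∃ a b : Bool, u i = some a ∧ v i = some b ∧ a ≠ b).card

/-- `nkd k d` is `n(k,d)`: the maximum size of a family of strings in `S^d` any two
distinct members of which are at distance at least `1` and at most `k`. -/
noncomputable def nkd (k d : ℕ) : ℕ :=
  sSup {m | ∃ F : Finset (JString d),
    (∀ u ∈ F, ∀ v ∈ F, u ≠ v → 1 ≤ jDist u v ∧ jDist u v ≤ k) ∧ F.card = m}


/-!
Write `m = d - s`. A string is built from a binary prefix, the indicator of a set `X ⊆ [m]`,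
followed by a suffix of length `s` that carries binary digits exactly on a set `A(X)` of
`k(|X|)` positions and jokers elsewhere, where `k(w) = min(s, max(0, w - (d/2 - s)))`.
Two such strings are at distance at most `|X ∆ Y| + |A(X) ∩ A(Y)|`, so it suffices that
`|A(X) ∩ A(Y)| ≤ m - |X ∆ Y|`. Ordering the `s` suffix positions by a rule depending on the first
`s` bits of the prefix and letting `A(X)` be the first `k(|X|)` of them gives `A(Xᶜ) = A(X)ᶜ`,
and makes `|A(X) \ A(Y)| ≤ |X ∆ Y|` (check it for single flips and chain). Hence
`|A(X) ∩ A(Y)| = |A(Y) \ A(Xᶜ)| ≤ |Y ∆ Xᶜ| = m - |X ∆ Y|`. Counting the strings by `|X|`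
gives the bound.
-/

open Finset
open scoped symmDiff

namespace NeighborlyBoxes

section Rank

variable {α β : Type*} [Fintype α] [LinearOrder β] {f f' g : α → β}

def rank (f : α → β) (a : α) : ℕ := #{b | f b < f a}

def smallest (f : α → β) (k : ℕ) : Finset α := {a | rank f a < k}

lemma rank_lt_rank_of_lt {a b : α} (h : f a < f b) : rank f a < rank f b := by
  refine card_lt_card ((ssubset_iff_of_subset fun c hc => ?_).2 ⟨a, ?_, ?_⟩)
  · simp only [mem_filter, mem_univ, true_and] at hc ⊢
    exact hc.trans h
  · simpa using h
  · simp

lemma rank_injective (hf : Function.Injective f) : Function.Injective (rank f) := by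
  intro a b hab
  rcases lt_trichotomy (f a) (f b) with h | h | h
  · exact absurd hab (rank_lt_rank_of_lt h).ne
  · exact hf h
  · exact absurd hab (rank_lt_rank_of_lt h).ne'

lemma rank_lt_card (f : α → β) (a : α) : rank f a < Fintype.card α :=
  card_lt_card ((ssubset_iff_of_subset (subset_univ _)).2 ⟨a, mem_univ a, by simp⟩)

lemma card_smallest (hf : Function.Injective f) {k : ℕ} (hk : k ≤ Fintype.card α) :
    #(smallest f k) = k := by
  have himage : univ.image (rank f) = range (Fintype.card α) :=
    eq_of_subset_of_card_le (fun n hn => by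
      obtain ⟨a, -, rfl⟩ := mem_image.1 hn
      exact mem_range.2 (rank_lt_card f a))
      (by rw [card_range, card_image_of_injective _ (rank_injective hf), card_univ])
  calc #(smallest f k) = #((smallest f k).image (rank f)) :=
        (card_image_of_injective _ (rank_injective hf)).symm
    _ = #((range (Fintype.card α)).filter (· < k)) := by
        rw [smallest, ← filter_image (p := (· < k)), himage]
    _ = #(range k) := congrArg card (by ext n; simp only [mem_filter, mem_range]; omega)
    _ = k := card_range k

lemma rank_add_rank_of_reverse [DecidableEq α] (hf : Function.Injective f)
    (hg : ∀ a b, g a < g b ↔ f b < f a) (a : α) :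
    rank g a + rank f a + 1 = Fintype.card α := by
  have hnot : ({b | ¬ f b < f a} : Finset α) = insert a ({b | f a < f b} : Finset α) := by
    ext b
    simp only [mem_filter, mem_univ, true_and, mem_insert, not_lt]
    constructor
    · intro h
      rcases h.lt_or_eq with h | h
      · exact Or.inr h
      · exact Or.inl (hf h.symm)
    · rintro (rfl | h)
      · exact le_rfl
      · exact h.le
  have hsplit := card_filter_add_card_filter_not (s := univ) (fun b => f b < f a)
  rw [hnot, card_insert_of_notMem (by simp), card_univ] at hsplit
  have hrank : rank g a = #{b | f a < f b} := by simp only [rank, hg]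
  rw [hrank, rank]
  omega

lemma smallest_card_sub_eq_compl [DecidableEq α] (hf : Function.Injective f)
    (hg : ∀ a b, g a < g b ↔ f b < f a) (k : ℕ) :
    smallest g (Fintype.card α - k) = (smallest f k)ᶜ := by
  ext a
  have h := rank_add_rank_of_reverse hf hg a
  have hlt := rank_lt_card f a
  simp only [smallest, mem_filter, mem_univ, true_and, mem_compl]
  omega

lemma rank_le_rank_add_one [DecidableEq α] (hle : ∀ a, f' a ≤ f a)
    (hdiff : {a | f' a ≠ f a}.Subsingleton) (a : α) : rank f' a ≤ rank f a + 1 := by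
  have hsub : ({b | f' b < f' a} : Finset α) ⊆
      ({b | f b < f a} : Finset α) ∪ ({b | f' b ≠ f b} : Finset α) := by
    intro b hb
    simp only [mem_filter, mem_univ, true_and, mem_union] at hb ⊢
    by_cases hfb : f' b = f b
    · exact Or.inl (hfb ▸ hb.trans_le (hle a))
    · exact Or.inr hfb
  have hone : #({b | f' b ≠ f b} : Finset α) ≤ 1 :=
    card_le_one.2 fun b hb c hc => hdiff (by simpa using hb) (by simpa using hc)
  exact (card_le_card hsub).trans ((card_union_le _ _).trans (by rw [rank]; omega))

lemma card_smallest_sdiff_le_one [DecidableEq α] (hf : Function.Injective f)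
    (hf' : Function.Injective f') (hrank : ∀ a, rank f' a ≤ rank f a + 1) {k k' : ℕ}
    (hk : k ≤ k') (hk' : k' ≤ k + 1) (hcard : k' ≤ Fintype.card α) :
    #(smallest f k \ smallest f' k') ≤ 1 ∧ #(smallest f' k' \ smallest f k) ≤ 1 := by
  have hmem : ∀ a ∈ smallest f k \ smallest f' k', k' = k ∧ rank f a + 1 = k := by
    intro a ha
    simp only [smallest, mem_sdiff, mem_filter, mem_univ, true_and, not_lt] at ha
    have := hrank a
    omega
  have hone : #(smallest f k \ smallest f' k') ≤ 1 :=
    card_le_one.2 fun a ha b hb => rank_injective hf (by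
      have := hmem a ha
      have := hmem b hb
      omega)
  -- The second bound follows by counting: both sets have the prescribed sizes `k ≤ k'`.
  have hempty : #(smallest f k \ smallest f' k') = 0 ∨ k' = k := by
    rcases (smallest f k \ smallest f' k').eq_empty_or_nonempty with h | ⟨a, ha⟩
    · exact Or.inl (by rw [h, card_empty])
    · exact Or.inr (hmem a ha).1
  have h1 := card_sdiff_add_card_inter (smallest f k) (smallest f' k')
  have h2 := card_sdiff_add_card_inter (smallest f' k') (smallest f k)
  rw [card_smallest hf (by omega)] at h1
  rw [card_smallest hf' hcard, inter_comm] at h2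
  omega

end Rank

lemma card_sdiff_le_card_symmDiff {ι α : Type*} [DecidableEq ι] [DecidableEq α]
    (A : Finset ι → Finset α) (hA : ∀ X i, #(A X \ A (X ∆ {i})) ≤ 1) (X Y : Finset ι) :
    #(A X \ A Y) ≤ #(X ∆ Y) := by
  suffices h : ∀ D X, #(A X \ A (X ∆ D)) ≤ #D by
    simpa only [symmDiff_symmDiff_cancel_left] using h (X ∆ Y) X
  intro D
  induction D using Finset.induction_on with
  | empty => exact fun X => by simp [symmDiff_eq_sup_sdiff_inf]
  | insert i D hi ih =>
    intro X
    have hD : X ∆ insert i D = (X ∆ {i}) ∆ D := by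
      rw [insert_eq, ← sup_eq_union, ← (disjoint_singleton_left.2 hi).symmDiff_eq_sup,
        symmDiff_assoc]
    calc #(A X \ A (X ∆ insert i D))
        ≤ #(A X \ A (X ∆ {i}) ∪ A (X ∆ {i}) \ A ((X ∆ {i}) ∆ D)) :=
          card_le_card (hD ▸ sdiff_triangle _ _ _)
      _ ≤ 1 + #D := (card_union_le _ _).trans (add_le_add (hA X i) (ih _))
      _ = #(insert i D) := by rw [card_insert_of_notMem hi, add_comm]

section BinarySet

variable {m s : ℕ} (hsm : s ≤ m)

/-- Positions in `X` come first, in decreasing order, then the others in increasing order.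
Complementing `X` reverses this order, and inserting a position into `X` only moves that
position forward. -/
def key (X : Finset (Fin m)) (j : Fin s) : ℤ :=
  if Fin.castLE hsm j ∈ X then -1 - j else j

lemma key_injective (X : Finset (Fin m)) : Function.Injective (key hsm X) := by
  intro a b h
  simp only [key] at h
  ext
  split_ifs at h <;> omega

lemma key_compl (X : Finset (Fin m)) (j : Fin s) : key hsm Xᶜ j = -1 - key hsm X j := by
  simp only [key, mem_compl]
  split_ifs <;> ring

lemma key_insert_le (X : Finset (Fin m)) (i : Fin m) (j : Fin s) :
    key hsm (insert i X) j ≤ key hsm X j := by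
  by_cases hj : Fin.castLE hsm j ∈ X
  · simp [key, hj]
  · simp only [key, mem_insert, hj, or_false, if_false]
    split_ifs <;> omega

lemma key_insert_ne_subsingleton (X : Finset (Fin m)) (i : Fin m) :
    {j | key hsm (insert i X) j ≠ key hsm X j}.Subsingleton := by
  have hcast : ∀ j, key hsm (insert i X) j ≠ key hsm X j → Fin.castLE hsm j = i := by
    intro j hj
    by_contra hne
    simp [key, mem_insert, hne] at hj
  exact fun a ha b hb => Fin.castLE_injective hsm ((hcast a ha).trans (hcast b hb).symm)

variable (k : ℕ → ℕ)

def binarySet (X : Finset (Fin m)) : Finset (Fin s) := smallest (key hsm X) (k #X)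

variable {k}

lemma apply_le_of_apply_sub_eq (hk : ∀ w ≤ m, k (m - w) = s - k w) {w : ℕ} (hw : w ≤ m) :
    k w ≤ s := by
  have h := hk (m - w) (Nat.sub_le m w)
  rw [Nat.sub_sub_self hw] at h
  omega

lemma card_binarySet (hk : ∀ w ≤ m, k (m - w) = s - k w) (X : Finset (Fin m)) :
    #(binarySet hsm k X) = k #X :=
  card_smallest (key_injective hsm X) ((apply_le_of_apply_sub_eq hk (card_finset_fin_le X)).trans_eq
    (Fintype.card_fin s).symm)

lemma binarySet_compl (hk : ∀ w ≤ m, k (m - w) = s - k w) (X : Finset (Fin m)) :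
    binarySet hsm k Xᶜ = (binarySet hsm k X)ᶜ := by
  have h := smallest_card_sub_eq_compl (key_injective hsm X) (g := key hsm Xᶜ)
    (fun a b => by simp only [key_compl]; omega) (k #X)
  rw [Fintype.card_fin] at h
  rw [binarySet, binarySet, card_compl, Fintype.card_fin, hk _ (card_finset_fin_le X), h]

lemma card_binarySet_insert_sdiff_le_one (hmono : Monotone k) (hlip : ∀ w, k (w + 1) ≤ k w + 1)
    (hk : ∀ w ≤ m, k (m - w) = s - k w) {X : Finset (Fin m)} {i : Fin m} (hi : i ∉ X) :
    #(binarySet hsm k X \ binarySet hsm k (insert i X)) ≤ 1 ∧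
      #(binarySet hsm k (insert i X) \ binarySet hsm k X) ≤ 1 := by
  have hcard : #(insert i X) = #X + 1 := card_insert_of_notMem hi
  refine card_smallest_sdiff_le_one (key_injective hsm X) (key_injective hsm _)
    (rank_le_rank_add_one (key_insert_le hsm X i) (key_insert_ne_subsingleton hsm X i)) ?_ ?_ ?_
  · exact hcard ▸ hmono (Nat.le_succ _)
  · exact hcard ▸ hlip _
  · exact (apply_le_of_apply_sub_eq hk (card_finset_fin_le _)).trans_eq (Fintype.card_fin s).symm

lemma card_binarySet_sdiff_symmDiff_singleton_le_one (hmono : Monotone k)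
    (hlip : ∀ w, k (w + 1) ≤ k w + 1) (hk : ∀ w ≤ m, k (m - w) = s - k w)
    (X : Finset (Fin m)) (i : Fin m) :
    #(binarySet hsm k X \ binarySet hsm k (X ∆ {i})) ≤ 1 := by
  by_cases hi : i ∈ X
  · have hX : X ∆ {i} = X.erase i := by
      ext a
      by_cases a = i <;> simp_all [mem_symmDiff]
    have h := (card_binarySet_insert_sdiff_le_one hsm hmono hlip hk (notMem_erase i X)).2
    rwa [insert_erase hi, ← hX] at h
  · have hX : X ∆ {i} = insert i X := by
      ext a
      by_cases a = i <;> simp_all [mem_symmDiff]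
    exact hX ▸ (card_binarySet_insert_sdiff_le_one hsm hmono hlip hk hi).1

lemma card_binarySet_inter_add_card_symmDiff_le (hmono : Monotone k)
    (hlip : ∀ w, k (w + 1) ≤ k w + 1) (hk : ∀ w ≤ m, k (m - w) = s - k w)
    (X Y : Finset (Fin m)) :
    #(binarySet hsm k X ∩ binarySet hsm k Y) + #(X ∆ Y) ≤ m := by
  have h := card_sdiff_le_card_symmDiff (binarySet hsm k)
    (card_binarySet_sdiff_symmDiff_singleton_le_one hsm hmono hlip hk) Y Xᶜ
  have hY : Y ∆ Xᶜ = (X ∆ Y)ᶜ := by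
    ext a
    simp only [mem_symmDiff, mem_compl]
    tauto
  rw [binarySet_compl hsm hk, sdiff_compl, inf_eq_inter, inter_comm, hY, card_compl,
    Fintype.card_fin] at h
  have := card_finset_fin_le (X ∆ Y)
  omega

end BinarySet

section Family

def maskedString {n : ℕ} (A B : Finset (Fin n)) : JString n :=
  fun i => if i ∈ A then some (decide (i ∈ B)) else none

lemma jDist_self {n : ℕ} (u : JString n) : jDist u u = 0 :=
  card_eq_zero.2 <| filter_eq_empty_iff.2 fun _ _ ⟨_, _, ha, hb, hab⟩ =>
    hab (Option.some_injective _ (ha.symm.trans hb))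

lemma jDist_maskedString {n : ℕ} (A B A' B' : Finset (Fin n)) :
    jDist (maskedString A B) (maskedString A' B') = #(A ∩ A' ∩ B ∆ B') := by
  unfold jDist
  congr 1
  ext i
  by_cases hA : i ∈ A <;> by_cases hA' : i ∈ A' <;> simp [maskedString, hA, hA', mem_symmDiff]
  tauto

lemma jDist_append {m n : ℕ} (u v : JString m) (u' v' : JString n) :
    jDist (Fin.append u u') (Fin.append v v') = jDist u v + jDist u' v' := by
  simp only [jDist, card_filter, Fin.sum_univ_add, Fin.append_left, Fin.append_right]

lemma card_le_nkd {k d : ℕ} (F : Finset (JString d))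
    (hF : ∀ u ∈ F, ∀ v ∈ F, u ≠ v → 1 ≤ jDist u v ∧ jDist u v ≤ k) : #F ≤ nkd k d :=
  le_csSup ⟨Fintype.card (JString d), by rintro _ ⟨G, -, rfl⟩; exact card_le_univ G⟩ ⟨F, hF, rfl⟩

variable {m s : ℕ} (A : Finset (Fin m) → Finset (Fin s))

def familyIndex : Finset ((_ : Finset (Fin m)) × Finset (Fin s)) :=
  univ.sigma fun X => (A X).powerset

def familyString (p : (_ : Finset (Fin m)) × Finset (Fin s)) : JString (m + s) :=
  Fin.append (maskedString univ p.1) (maskedString (A p.1) p.2)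

def family : Finset (JString (m + s)) := (familyIndex A).image (familyString A)

lemma jDist_familyString (p q : (_ : Finset (Fin m)) × Finset (Fin s)) :
    jDist (familyString A p) (familyString A q) =
      #(p.1 ∆ q.1) + #(A p.1 ∩ A q.1 ∩ p.2 ∆ q.2) := by
  rw [familyString, familyString, jDist_append, jDist_maskedString, jDist_maskedString,
    univ_inter, univ_inter]

lemma jDist_familyString_pos {p q : (_ : Finset (Fin m)) × Finset (Fin s)}
    (hp : p ∈ familyIndex A) (hq : q ∈ familyIndex A) (hpq : p ≠ q) :
    0 < jDist (familyString A p) (familyString A q) := by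
  obtain ⟨X, B⟩ := p
  obtain ⟨Y, C⟩ := q
  simp only [familyIndex, mem_sigma, mem_univ, mem_powerset, true_and] at hp hq
  rw [jDist_familyString]
  by_cases hXY : X = Y
  · subst hXY
    have hBC : B ∆ C ≠ ∅ := by
      rw [← bot_eq_empty, Ne, symmDiff_eq_bot]
      exact fun h => hpq (h ▸ rfl)
    have hsub : A X ∩ A X ∩ B ∆ C = B ∆ C := by
      rw [inter_self]
      exact inter_eq_right.2 (symmDiff_le_sup.trans (union_subset hp hq))
    rw [hsub]
    exact Nat.add_pos_right _ (card_pos.2 (nonempty_iff_ne_empty.2 hBC))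
  · have hXY' : X ∆ Y ≠ ∅ := by rwa [← bot_eq_empty, Ne, symmDiff_eq_bot]
    exact Nat.add_pos_left (card_pos.2 (nonempty_iff_ne_empty.2 hXY')) _

lemma card_family : #(family A) = ∑ X, 2 ^ #(A X) := by
  rw [family, card_image_of_injOn, familyIndex, card_sigma]
  · simp only [card_powerset]
  · intro p hp q hq h
    by_contra hpq
    have := jDist_familyString_pos A hp hq hpq
    rw [h, jDist_self] at this
    exact this.false

lemma family_neighborly (hA : ∀ X Y, #(A X ∩ A Y) + #(X ∆ Y) ≤ m) :
    ∀ u ∈ family A, ∀ v ∈ family A, u ≠ v → 1 ≤ jDist u v ∧ jDist u v ≤ m := by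
  simp only [family, mem_image]
  rintro _ ⟨p, hp, rfl⟩ _ ⟨q, hq, rfl⟩ huv
  refine ⟨jDist_familyString_pos A hp hq fun h => huv (h ▸ rfl), ?_⟩
  rw [jDist_familyString]
  have := card_le_card (inter_subset_left (s₁ := A p.1 ∩ A q.1) (s₂ := p.2 ∆ q.2))
  have := hA p.1 q.1
  omega

theorem sum_two_pow_card_le_nkd (hA : ∀ X Y, #(A X ∩ A Y) + #(X ∆ Y) ≤ m) :
    ∑ X, 2 ^ #(A X) ≤ nkd m (m + s) :=
  card_family A ▸ card_le_nkd _ (family_neighborly A hA)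

end Family

theorem sum_choose_mul_two_pow_le_nkd {m s : ℕ} (k : ℕ → ℕ) (hsm : s ≤ m) (hmono : Monotone k)
    (hlip : ∀ w, k (w + 1) ≤ k w + 1) (hk : ∀ w ≤ m, k (m - w) = s - k w) :
    ∑ w ∈ range (m + 1), m.choose w * 2 ^ k w ≤ nkd m (m + s) := by
  have h := sum_two_pow_card_le_nkd (binarySet hsm k)
    (card_binarySet_inter_add_card_symmDiff_le hsm hmono hlip hk)
  simp only [card_binarySet hsm hk] at h
  rwa [← powerset_univ, sum_powerset_apply_card (fun w => 2 ^ k w), card_univ,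
    Fintype.card_fin] at h

lemma sum_range_mul_two_pow_min (f : ℕ → ℕ) {m s t : ℕ} (hs : 0 < s) (hst : t + s ≤ m + 1) :
    ∑ w ∈ range (m + 1), f w * 2 ^ min s (w - t) =
      ∑ i ∈ range (t + 1), f i + ∑ j ∈ Icc 1 (s - 1), 2 ^ j * f (t + j)
        + 2 ^ s * ∑ i ∈ Icc (t + s) m, f i := by
  set g := fun w => f w * 2 ^ min s (w - t)
  have hlow : ∑ w ∈ Ico 0 (t + 1), g w = ∑ i ∈ range (t + 1), f i := by
    rw [← range_eq_Ico]
    refine sum_congr rfl fun w hw => ?_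
    rw [mem_range] at hw
    simp only [g, show min s (w - t) = 0 by omega, pow_zero, mul_one]
  have hmid : ∑ w ∈ Ico (t + 1) (t + s), g w = ∑ j ∈ Icc 1 (s - 1), 2 ^ j * f (t + j) := by
    rw [show Icc 1 (s - 1) = Ico 1 s by ext; simp only [mem_Icc, mem_Ico]; omega,
      add_comm t 1, add_comm t s, ← sum_Ico_add]
    refine sum_congr rfl fun j hj => ?_
    rw [mem_Ico] at hj
    simp only [g, show min s (t + j - t) = j by omega, mul_comm]
  have hhigh : ∑ w ∈ Ico (t + s) (m + 1), g w = 2 ^ s * ∑ i ∈ Icc (t + s) m, f i := by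
    rw [mul_sum, ← Ico_add_one_right_eq_Icc]
    refine sum_congr rfl fun w hw => ?_
    rw [mem_Ico] at hw
    simp only [g, show min s (w - t) = s by omega, mul_comm]
  rw [← hlow, ← hmid, ← hhigh, sum_Ico_consecutive _ (by omega) (by omega),
    sum_Ico_consecutive _ (by omega) hst, range_eq_Ico]

end NeighborlyBoxes

theorem neighborly_lower_bound_general (s d : ℕ) (hs : 0 < s)
    (hsd : 2 * s ≤ d) (hde : Even d) :
    ∑ i ∈ Finset.range (d / 2 - s + 1), (d - s).choose i
      + ∑ k ∈ Finset.Icc 1 (s - 1), 2 ^ k * (d - s).choose (d / 2 - s + k)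
      + 2 ^ s * ∑ i ∈ Finset.Icc (d / 2) (d - s), (d - s).choose i
    ≤ nkd (d - s) d := by
  obtain ⟨t, rfl⟩ : ∃ t, d = s + 2 * t + s :=
    ⟨(d - 2 * s) / 2, by obtain ⟨r, rfl⟩ := hde; omega⟩
  have hhalf : (s + 2 * t + s) / 2 = t + s := by omega
  rw [hhalf, Nat.add_sub_cancel, Nat.add_sub_cancel,
    ← NeighborlyBoxes.sum_range_mul_two_pow_min _ hs (by omega)]
  exact NeighborlyBoxes.sum_choose_mul_two_pow_le_nkd (fun w => min s (w - t)) (by omega)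
    (fun a b hab => by dsimp only; omega) (fun w => by omega) (fun w _ => by omega)

/-- Let `s` and `d` be positive integers with `s ≤ d/2` and `d` even. Then
`n(d-s,d) ≥ Σ_{i=0}^{d/2-s} C(d-s,i) + Σ_{k=1}^{s-1} 2^k C(d-s, d/2-s+k)
  + 2^s Σ_{i=d/2}^{d-s} C(d-s,i)`. -/
theorem neighborly_lower_bound (s d : ℕ) (hs : 0 < s) (hd : 0 < d)
    (hsd : 2 * s ≤ d) (hde : Even d) :
    ∑ i ∈ Finset.range (d / 2 - s + 1), (d - s).choose i
      + ∑ k ∈ Finset.Icc 1 (s - 1), 2 ^ k * (d - s).choose (d / 2 - s + k)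
      + 2 ^ s * ∑ i ∈ Finset.Icc (d / 2) (d - s), (d - s).choose i
    ≤ nkd (d - s) d :=
  neighborly_lower_bound_general s d hs hsd hde
end

section
/- For every fixed positive integer s, the limit as d → ∞ of n(d-s, d)/2^d equals (2^s + 1)/2^{s+1}. -/
/-!
A string `u` covers the subcube `cube u` of its `2 ^ numJokers u` binary completions. Distance
at least `1` makes these cubes disjoint, so `∑ 2 ^ numJokers u ≤ 2 ^ d`. Distance at most `d - s`
forces two strings with `numJokers u + numJokers v < s` to agree in some binary coordinate, so the
cube of `u` misses the antipodal image of the cube of `v`; this bounds the weight of the strings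
with few jokers. Summation by parts and Chebyshev's sum inequality combine these bounds into
`2 ^ (s + 1) * #F ≤ (2 ^ s + 1) * 2 ^ d`.

Conversely, the binary strings with at most `(d - s) / 2` ones, together with the strings having
jokers on a fixed `s`-set and few zeros elsewhere, form an admissible family of size
`(1 / 2 + 1 / 2 ^ (s + 1) - o(1)) * 2 ^ d`, because the middle binomial coefficient is `o(2 ^ n)`.
-/

namespace Nat

lemma two_mul_add_one_mul_centralBinom_sq_le (m : ℕ) :
    (2 * m + 1) * centralBinom m ^ 2 ≤ 16 ^ m := by
  induction m with
  | zero => simp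
  | succ m ih =>
    refine Nat.le_of_mul_le_mul_left ?_ (pow_pos (succ_pos m) 2)
    calc (m + 1) ^ 2 * ((2 * (m + 1) + 1) * centralBinom (m + 1) ^ 2)
        = (2 * m + 3) * ((m + 1) * centralBinom (m + 1)) ^ 2 := by ring
      _ = 4 * (2 * m + 3) * (2 * m + 1) * ((2 * m + 1) * centralBinom m ^ 2) := by
          rw [succ_mul_centralBinom_succ]; ring
      _ ≤ 16 * (m + 1) ^ 2 * 16 ^ m := Nat.mul_le_mul (by nlinarith) ih
      _ = (m + 1) ^ 2 * 16 ^ (m + 1) := by ring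

lemma centralBinom_succ_eq_two_mul_choose (m : ℕ) :
    centralBinom (m + 1) = 2 * (2 * m + 1).choose m := by
  rw [centralBinom_eq_two_mul_choose, show 2 * (m + 1) = 2 * m + 1 + 1 by ring, choose_succ_succ,
    choose_symm_half]
  ring

end Nat

open Filter Topology Finset

lemma tendsto_centralBinom_div_four_pow :
    Tendsto (fun m : ℕ => (m.centralBinom : ℝ) / 4 ^ m) atTop (𝓝 0) := by
  have hsq : ∀ m : ℕ, ((m.centralBinom : ℝ) / 4 ^ m) ^ 2 ≤ 1 / ((m : ℝ) + 1) := fun m => by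
    have h16 : ((4 : ℝ) ^ m) ^ 2 = 16 ^ m := by rw [← pow_mul, mul_comm, pow_mul]; norm_num
    have hcast : ((2 * m + 1 : ℕ) : ℝ) * (m.centralBinom : ℝ) ^ 2 ≤ 16 ^ m := by
      exact_mod_cast Nat.two_mul_add_one_mul_centralBinom_sq_le m
    rw [div_pow, h16, div_le_div_iff₀ (by positivity) (by positivity)]
    push_cast at hcast
    nlinarith [sq_nonneg (m.centralBinom : ℝ)]
  have hsqrt : Tendsto (fun m : ℕ => √(1 / ((m : ℝ) + 1))) atTop (𝓝 0) := by
    simpa using tendsto_one_div_add_atTop_nhds_zero_nat.sqrt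
  exact tendsto_of_tendsto_of_tendsto_of_le_of_le tendsto_const_nhds hsqrt
    (fun m => by positivity) (fun m => (le_abs_self _).trans (Real.abs_le_sqrt (hsq m)))

lemma choose_half_div_two_pow (n : ℕ) :
    (n.choose (n / 2) : ℝ) / 2 ^ n = ((n + 1) / 2).centralBinom / 4 ^ ((n + 1) / 2) := by
  obtain ⟨m, rfl | rfl⟩ := Nat.even_or_odd' n
  · rw [show (2 * m + 1) / 2 = m by omega, show 2 * m / 2 = m by omega, pow_mul,
      ← Nat.centralBinom_eq_two_mul_choose]
    norm_num
  · rw [show (2 * m + 1 + 1) / 2 = m + 1 by omega, show (2 * m + 1) / 2 = m by omega,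
      Nat.centralBinom_succ_eq_two_mul_choose, pow_succ, pow_mul]
    push_cast
    field_simp
    ring

lemma tendsto_choose_half_div_two_pow :
    Tendsto (fun n : ℕ => (n.choose (n / 2) : ℝ) / 2 ^ n) atTop (𝓝 0) := by
  simp only [choose_half_div_two_pow]
  exact tendsto_centralBinom_div_four_pow.comp
    ((Nat.tendsto_div_const_atTop two_ne_zero).comp (tendsto_add_atTop_nat 1))

lemma sum_range_two_pow_sub_add_two (n : ℕ) : ∑ j ∈ range n, 2 ^ (n - j) + 2 = 2 ^ (n + 1) := by
  induction n with
  | zero => simp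
  | succ n ih =>
    rw [sum_range_succ', Nat.sub_zero, add_right_comm]
    simp only [Nat.succ_sub_succ, ih, pow_succ]
    ring

lemma two_pow_succ_le_add_sum (s m : ℕ) :
    2 ^ (s + 1) ≤ 2 ^ (m + 1) + ∑ j ∈ range s, if m ≤ j then 2 ^ (s - j) * 2 ^ m else 0 := by
  rcases lt_or_ge s m with hsm | hms
  · exact le_add_right (Nat.pow_le_pow_right two_pos (by omega))
  have hIco : (range s).filter (m ≤ ·) = Ico m s := by
    ext j; simp only [mem_filter, mem_range, mem_Ico]; omega
  have hgeom := sum_range_two_pow_sub_add_two (s - m)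
  rw [← sum_filter, hIco, sum_Ico_eq_sum_range, ← sum_mul]
  refine le_of_eq ?_
  calc 2 ^ (s + 1) = (∑ j ∈ range (s - m), 2 ^ (s - m - j) + 2) * 2 ^ m := by
        rw [hgeom, ← pow_add]; congr 1; omega
    _ = 2 ^ (m + 1) + (∑ j ∈ range (s - m), 2 ^ (s - (m + j))) * 2 ^ m := by
        rw [add_mul, ← pow_succ', add_comm]
        simp only [Nat.sub_sub]

lemma two_mul_sum_range_le {s D : ℕ} {M : ℕ → ℕ} (hM : ∀ i j, i + j + 1 = s → M i + M j ≤ D) :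
    2 * ∑ j ∈ range s, M j ≤ s * D := by
  calc 2 * ∑ j ∈ range s, M j = ∑ j ∈ range s, (M j + M (s - 1 - j)) := by
        rw [sum_add_distrib, sum_range_reflect M s, two_mul]
    _ ≤ ∑ _j ∈ range s, D := sum_le_sum fun j hj => hM _ _ (by simp at hj; omega)
    _ = s * D := by simp

/-- Chebyshev's sum inequality for the decreasing weights `2 ^ (s - j)` against the increasing
`M`, followed by pairing `M j` with `M (s - 1 - j)`. -/
lemma sum_two_pow_mul_add_le {s D : ℕ} {M : ℕ → ℕ} (hM : Monotone M)
    (hpair : ∀ i j, i + j + 1 = s → M i + M j ≤ D) :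
    ∑ j ∈ range s, 2 ^ (s - j) * M j + D ≤ 2 ^ s * D := by
  rcases Nat.eq_zero_or_pos s with rfl | hs
  · simp
  have hanti : Antitone fun j => 2 ^ (s - j) :=
    fun i j hij => Nat.pow_le_pow_right two_pos (by omega)
  have hcheb := ((hanti.antivary hM).antivaryOn (range s : Set ℕ)).card_mul_sum_le_sum_mul_sum
  obtain ⟨t, ht⟩ : ∃ t, 2 ^ s = t + 1 := ⟨2 ^ s - 1, by have := Nat.one_le_two_pow (n := s); omega⟩
  have hw : ∑ j ∈ range s, 2 ^ (s - j) = 2 * t := by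
    have := sum_range_two_pow_sub_add_two s
    rw [pow_succ, ht] at this
    omega
  rw [card_range, hw] at hcheb
  have hpaired := Nat.mul_le_mul_left t (two_mul_sum_range_le hpair)
  refine Nat.le_of_mul_le_mul_left ?_ hs
  rw [ht]
  linarith

namespace Finset

lemma sum_card_add_sum_card_le_card {ι α : Type*} [Fintype α] [DecidableEq α]
    {s t : Finset ι} {f g : ι → Finset α}
    (hf : (s : Set ι).PairwiseDisjoint f) (hg : (t : Set ι).PairwiseDisjoint g)
    (hfg : ∀ i ∈ s, ∀ j ∈ t, Disjoint (f i) (g j)) :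
    ∑ i ∈ s, #(f i) + ∑ j ∈ t, #(g j) ≤ Fintype.card α := by
  rw [← card_biUnion hf, ← card_biUnion hg, ← card_union_of_disjoint]
  · exact card_le_univ _
  · simp only [disjoint_biUnion_left, disjoint_biUnion_right]
    exact fun j hj i hi => hfg i hi j hj

def weightUpTo {ι : Type*} (F : Finset ι) (f : ι → ℕ) (j : ℕ) : ℕ :=
  ∑ u ∈ F with f u ≤ j, 2 ^ f u

lemma weightUpTo_mono {ι : Type*} (F : Finset ι) (f : ι → ℕ) : Monotone (weightUpTo F f) :=
  fun _ _ hij => sum_le_sum_of_subset fun u => by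
    simp only [mem_filter]
    exact And.imp_right (·.trans hij)

/-- Summation by parts: the weight `2 ^ (s + 1)` of each member splits along the thresholds
`j < s`. -/
lemma two_pow_succ_mul_card_le {ι : Type*} (F : Finset ι) (f : ι → ℕ) (s : ℕ) :
    2 ^ (s + 1) * #F ≤
      2 * ∑ u ∈ F, 2 ^ f u + ∑ j ∈ range s, 2 ^ (s - j) * weightUpTo F f j := by
  calc 2 ^ (s + 1) * #F = ∑ u ∈ F, 2 ^ (s + 1) := by rw [sum_const, smul_eq_mul, mul_comm]
    _ ≤ ∑ u ∈ F, (2 ^ (f u + 1) +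
          ∑ j ∈ range s, if f u ≤ j then 2 ^ (s - j) * 2 ^ f u else 0) :=
        sum_le_sum fun u _ => two_pow_succ_le_add_sum s (f u)
    _ = 2 * ∑ u ∈ F, 2 ^ f u + ∑ j ∈ range s, 2 ^ (s - j) * weightUpTo F f j := by
        rw [sum_add_distrib, sum_comm, mul_sum]
        congr 1
        · exact sum_congr rfl fun u _ => pow_succ' 2 (f u)
        · refine sum_congr rfl fun j _ => ?_
          rw [weightUpTo, sum_filter, mul_sum]
          exact sum_congr rfl fun u _ => by split_ifs <;> simp

/-- Complementation in `T` matches the subsets of size at most `r` with those of size at least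
`#T - r`; each size in between is bounded by the middle binomial coefficient. -/
lemma two_pow_card_le {α : Type*} [DecidableEq α] (T : Finset α) (r : ℕ) :
    2 ^ #T ≤ 2 * #{A ∈ T.powerset | #A ≤ r} + (#T - (2 * r + 1)) * (#T).choose (#T / 2) := by
  set L := {A ∈ T.powerset | #A ≤ r}
  set M := (Icc (r + 1) (#T - r - 1)).biUnion (powersetCard · T)
  have hcover : T.powerset ⊆ (L ∪ L.image (T \ ·)) ∪ M := by
    intro A hA
    rw [mem_powerset] at hA
    simp only [L, M, mem_union, mem_image, mem_biUnion, mem_Icc, mem_powersetCard, mem_filter,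
      mem_powerset]
    by_cases h1 : #A ≤ r
    · exact Or.inl (Or.inl ⟨hA, h1⟩)
    by_cases h2 : #T - r ≤ #A
    · refine Or.inl (Or.inr ⟨T \ A, ⟨sdiff_subset, ?_⟩, Finset.sdiff_sdiff_eq_self hA⟩)
      have := card_le_card hA
      rw [card_sdiff_of_subset hA]
      omega
    · exact Or.inr ⟨#A, by omega, hA, rfl⟩
  have hM : #M ≤ (#T - (2 * r + 1)) * (#T).choose (#T / 2) :=
    calc #M ≤ ∑ i ∈ Icc (r + 1) (#T - r - 1), #(powersetCard i T) := card_biUnion_le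
      _ ≤ ∑ _i ∈ Icc (r + 1) (#T - r - 1), (#T).choose (#T / 2) :=
          sum_le_sum fun i _ => (card_powersetCard i T).trans_le (Nat.choose_le_middle i _)
      _ = (#T - (2 * r + 1)) * (#T).choose (#T / 2) := by
          rw [sum_const, Nat.card_Icc, smul_eq_mul]
          congr 1
          omega
  calc 2 ^ #T = #T.powerset := (card_powerset T).symm
    _ ≤ #L + #(L.image (T \ ·)) + #M :=
        (card_le_card hcover).trans ((card_union_le _ _).trans
          (Nat.add_le_add_right (card_union_le _ _) _))
    _ ≤ 2 * #L + (#T - (2 * r + 1)) * (#T).choose (#T / 2) := by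
        have := card_image_le (s := L) (f := (T \ ·))
        omega

end Finset

namespace JokerString

open scoped symmDiff

variable {d : ℕ}

def IsNeighborly (k : ℕ) (F : Finset (JString d)) : Prop :=
  ∀ u ∈ F, ∀ v ∈ F, u ≠ v → 1 ≤ jDist u v ∧ jDist u v ≤ k

def numJokers (u : JString d) : ℕ := #{i | u i = none}

def cube (u : JString d) : Finset (Fin d → Bool) :=
  Fintype.piFinset fun i => (u i).elim univ singleton

lemma mem_cube {u : JString d} {x : Fin d → Bool} : x ∈ cube u ↔ ∀ i, ∀ a ∈ u i, x i = a := by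
  refine Fintype.mem_piFinset.trans (forall_congr' fun i => ?_)
  cases u i with
  | none => simp
  | some b => simp only [Option.elim_some, mem_singleton, Option.mem_def, Option.some.injEq]; grind

lemma card_cube (u : JString d) : #(cube u) = 2 ^ numJokers u := by
  have h : ∀ i, #((u i).elim univ singleton) = 2 ^ (if u i = none then 1 else 0) := by
    intro i
    cases u i <;> simp
  simp only [cube, Fintype.card_piFinset, h, prod_pow_eq_pow_sum, sum_boole, numJokers]
  rfl

@[simp]
lemma jDist_self (u : JString d) : jDist u u = 0 := by
  simp only [jDist, card_eq_zero, filter_eq_empty_iff]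
  rintro i - ⟨a, b, ha, hb, hab⟩
  exact hab (Option.some_injective _ (ha.symm.trans hb))

lemma one_le_jDist_iff {u v : JString d} :
    1 ≤ jDist u v ↔ ∃ i a b, u i = some a ∧ v i = some b ∧ a ≠ b := by
  simp [jDist, Finset.one_le_card, filter_nonempty_iff]

lemma disjoint_cube_of_one_le_jDist {u v : JString d} (h : 1 ≤ jDist u v) :
    Disjoint (cube u) (cube v) := by
  obtain ⟨i, a, b, hu, hv, hab⟩ := one_le_jDist_iff.mp h
  refine disjoint_left.mpr fun x hxu hxv => hab ?_
  rw [← mem_cube.mp hxu i a hu, mem_cube.mp hxv i b hv]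

/-- Each position is a joker of `u` or of `v`, a disagreement, or an agreement. -/
lemma exists_agree_of_jDist_add_lt {u v : JString d}
    (h : jDist u v + numJokers u + numJokers v < d) : ∃ i a, u i = some a ∧ v i = some a := by
  by_contra! hno
  have hcover : (univ : Finset (Fin d)) ⊆
      (univ.filter (fun i => ∃ a b : Bool, u i = some a ∧ v i = some b ∧ a ≠ b) ∪
        univ.filter (u · = none)) ∪ univ.filter (v · = none) := by
    intro i _
    simp only [mem_union, mem_filter, mem_univ, true_and]
    cases hu : u i with
    | none => simp
    | some a =>
      cases hv : v i with
      | none => simp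
      | some b => exact Or.inl (Or.inl ⟨a, b, rfl, rfl, fun hab => hno i a hu (hab ▸ hv)⟩)
  have hd := (card_le_card hcover).trans ((card_union_le _ _).trans
    (Nat.add_le_add_right (card_union_le _ _) _))
  rw [card_univ, Fintype.card_fin] at hd
  unfold jDist numJokers at h
  omega

lemma disjoint_cube_image_compl_cube {u v : JString d} (h : ∃ i a, u i = some a ∧ v i = some a) :
    Disjoint (cube u) ((cube v).image compl) := by
  obtain ⟨i, a, hu, hv⟩ := h
  simp only [disjoint_left, mem_image, not_exists, not_and]
  intro x hx y hy hyx
  have h1 := mem_cube.mp hx i a hu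
  have h2 := mem_cube.mp hy i a hv
  rw [← hyx, Pi.compl_apply, h2] at h1
  cases a <;> simp at h1

lemma IsNeighborly.jDist_le {k : ℕ} {F : Finset (JString d)} (hF : IsNeighborly k F)
    {u v : JString d} (hu : u ∈ F) (hv : v ∈ F) : jDist u v ≤ k := by
  rcases eq_or_ne u v with rfl | huv
  · simp
  · exact (hF u hu v hv huv).2

lemma IsNeighborly.pairwiseDisjoint_cube {k : ℕ} {F : Finset (JString d)}
    (hF : IsNeighborly k F) (G : Finset (JString d)) (hG : G ⊆ F) :
    (G : Set (JString d)).PairwiseDisjoint cube :=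
  fun u hu v hv huv => disjoint_cube_of_one_le_jDist (hF u (hG hu) v (hG hv) huv).1

lemma sum_two_pow_numJokers_le {k : ℕ} {F : Finset (JString d)} (hF : IsNeighborly k F) :
    ∑ u ∈ F, 2 ^ numJokers u ≤ 2 ^ d := by
  simp only [← card_cube]
  rw [← card_biUnion (hF.pairwiseDisjoint_cube F subset_rfl)]
  simpa using card_le_univ (F.biUnion cube)

/-- Strings with few jokers pairwise agree somewhere, so their cubes are disjoint from the
antipodal images of each other's cubes. -/
lemma weightUpTo_add_weightUpTo_le {k i j : ℕ} {F : Finset (JString d)} (hF : IsNeighborly k F)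
    (h : k + i + j < d) : weightUpTo F numJokers i + weightUpTo F numJokers j ≤ 2 ^ d := by
  have hcompl : ∀ v : JString d, #((cube v).image compl) = 2 ^ numJokers v := fun v => by
    rw [card_image_of_injective _ compl_injective, card_cube]
  have key := sum_card_add_sum_card_le_card (s := F.filter (numJokers · ≤ i))
    (t := F.filter (numJokers · ≤ j)) (f := cube) (g := fun v => (cube v).image compl)
    (hF.pairwiseDisjoint_cube _ (filter_subset _ _))
    (fun u hu v hv huv => (disjoint_image compl_injective).mpr
      (hF.pairwiseDisjoint_cube _ (filter_subset _ _) hu hv huv))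
    (fun u hu v hv => by
      rw [mem_filter] at hu hv
      exact disjoint_cube_image_compl_cube (exists_agree_of_jDist_add_lt
        (by have := hF.jDist_le hu.1 hv.1; omega)))
  unfold weightUpTo
  simpa only [card_cube, hcompl, Fintype.card_fun, Fintype.card_bool, Fintype.card_fin] using key

theorem two_pow_succ_mul_card_le_of_isNeighborly {s : ℕ} (hsd : s ≤ d)
    {F : Finset (JString d)} (hF : IsNeighborly (d - s) F) :
    2 ^ (s + 1) * #F ≤ (2 ^ s + 1) * 2 ^ d := by
  have hparts := two_pow_succ_mul_card_le F numJokers s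
  have htotal := sum_two_pow_numJokers_le hF
  have hpaired := sum_two_pow_mul_add_le (s := s) (weightUpTo_mono F numJokers)
    (fun i j hij => weightUpTo_add_weightUpTo_le (i := i) (j := j) hF (by omega))
  linarith

def ofFinset (A : Finset (Fin d)) : JString d := fun i => some (decide (i ∈ A))

def jokered (P B : Finset (Fin d)) : JString d :=
  fun i => if i ∈ P then none else some (decide (i ∉ B))

lemma ofFinset_injective : Function.Injective (ofFinset (d := d)) := by
  intro A B h
  ext i
  simpa [ofFinset] using congrFun h i

lemma jokered_injOn (P : Finset (Fin d)) : Set.InjOn (jokered P) {B | B ⊆ Pᶜ} := by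
  intro B (hB : B ⊆ Pᶜ) B' (hB' : B' ⊆ Pᶜ) h
  ext i
  by_cases hi : i ∈ P
  · exact iff_of_false (fun h => mem_compl.mp (hB h) hi) (fun h => mem_compl.mp (hB' h) hi)
  · simpa [jokered, hi] using congrFun h i

lemma jDist_comm (u v : JString d) : jDist u v = jDist v u := by
  unfold jDist
  congr 1
  ext i
  simp only [mem_filter, mem_univ, true_and]
  exact ⟨fun ⟨a, b, ha, hb, hab⟩ => ⟨b, a, hb, ha, hab.symm⟩,
    fun ⟨a, b, ha, hb, hab⟩ => ⟨b, a, hb, ha, hab.symm⟩⟩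

lemma jDist_ofFinset (A B : Finset (Fin d)) : jDist (ofFinset A) (ofFinset B) = #(A ∆ B) := by
  unfold jDist
  congr 1
  ext i
  by_cases hA : i ∈ A <;> by_cases hB : i ∈ B <;> simp [ofFinset, mem_symmDiff, hA, hB]

lemma jDist_jokered_le (u : JString d) (P B : Finset (Fin d)) :
    jDist u (jokered P B) ≤ d - #P := by
  calc jDist u (jokered P B) ≤ #Pᶜ := card_le_card fun i hi => by
        simp only [mem_filter, mem_univ, true_and] at hi
        obtain ⟨a, b, -, hb, -⟩ := hi
        rw [mem_compl]
        intro hiP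
        simp [jokered, hiP] at hb
    _ = d - #P := by rw [card_compl, Fintype.card_fin]

lemma one_le_jDist_ofFinset_jokered {A P B : Finset (Fin d)} (h : #A + #B + #P < d) :
    1 ≤ jDist (ofFinset A) (jokered P B) := by
  have hlt : #(A ∪ B ∪ P) < #(univ : Finset (Fin d)) := by
    rw [card_univ, Fintype.card_fin]
    exact (card_union_le _ _).trans_lt
      (lt_of_le_of_lt (Nat.add_le_add_right (card_union_le _ _) _) h)
  obtain ⟨i, -, hi⟩ := exists_mem_notMem_of_card_lt_card hlt
  simp only [mem_union, not_or] at hi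
  exact one_le_jDist_iff.mpr ⟨i, false, true, by simp [ofFinset, hi.1.1],
    by simp [jokered, hi.1.2, hi.2], Bool.false_ne_true⟩

lemma one_le_jDist_jokered {P B B' : Finset (Fin d)} (hB : B ⊆ Pᶜ) (hB' : B' ⊆ Pᶜ)
    (hne : B ≠ B') : 1 ≤ jDist (jokered P B) (jokered P B') := by
  obtain ⟨i, hi⟩ := symmDiff_nonempty.mpr hne
  have hiP : i ∉ P := mem_compl.mp (union_subset hB hB' (symmDiff_subset_union hi))
  exact one_le_jDist_iff.mpr ⟨i, decide (i ∉ B), decide (i ∉ B'), by simp [jokered, hiP],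
    by simp [jokered, hiP], by rw [mem_symmDiff] at hi; grind⟩

lemma IsNeighborly.union {k : ℕ} {E J : Finset (JString d)} (hE : IsNeighborly k E)
    (hJ : IsNeighborly k J) (hEJ : ∀ u ∈ E, ∀ v ∈ J, 1 ≤ jDist u v ∧ jDist u v ≤ k) :
    IsNeighborly k (E ∪ J) := by
  intro u hu v hv huv
  rw [mem_union] at hu hv
  rcases hu with hu | hu <;> rcases hv with hv | hv
  · exact hE u hu v hv huv
  · exact hEJ u hu v hv
  · rw [jDist_comm]; exact hEJ v hv u hu
  · exact hJ u hu v hv huv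

lemma isNeighborly_image_ofFinset {k r : ℕ} (h : 2 * r ≤ k) :
    IsNeighborly k ({A ∈ (univ : Finset (Fin d)).powerset | #A ≤ r}.image ofFinset) := by
  simp only [IsNeighborly, mem_image, mem_filter, mem_powerset]
  rintro _ ⟨A, ⟨-, hA⟩, rfl⟩ _ ⟨A', ⟨-, hA'⟩, rfl⟩ hne
  rw [jDist_ofFinset]
  exact ⟨one_le_card.mpr (symmDiff_nonempty.mpr (mt (congrArg ofFinset) hne)),
    (card_le_card symmDiff_subset_union).trans ((card_union_le A A').trans (by omega))⟩

lemma isNeighborly_image_jokered (P : Finset (Fin d)) (r : ℕ) :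
    IsNeighborly (d - #P) ({B ∈ Pᶜ.powerset | #B ≤ r}.image (jokered P)) := by
  simp only [IsNeighborly, mem_image, mem_filter, mem_powerset]
  rintro _ ⟨B, ⟨hB, -⟩, rfl⟩ _ ⟨B', ⟨hB', -⟩, rfl⟩ hne
  exact ⟨one_le_jDist_jokered hB hB' (mt (congrArg (jokered P)) hne), jDist_jokered_le _ P B'⟩

/-- All binary strings with at most `(d - s) / 2` ones, together with all strings with jokers on a
fixed `s`-set and at most `(d - s - 1) / 2` zeros elsewhere. -/
theorem exists_isNeighborly_two_pow_add_two_pow_le {s : ℕ} (hsd : s < d) :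
    ∃ F : Finset (JString d), IsNeighborly (d - s) F ∧
      2 ^ d + 2 ^ (d - s) ≤ 2 * #F + s * d.choose (d / 2) + (d - s).choose ((d - s) / 2) := by
  obtain ⟨P, -, hP⟩ := exists_subset_card_eq (s := (univ : Finset (Fin d))) (n := s)
    (by simpa using hsd.le)
  have hPc : #Pᶜ = d - s := by rw [card_compl, Fintype.card_fin, hP]
  set E := {A ∈ (univ : Finset (Fin d)).powerset | #A ≤ (d - s) / 2}.image ofFinset
  set J := {B ∈ Pᶜ.powerset | #B ≤ (d - s - 1) / 2}.image (jokered P)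
  have hEJ : ∀ u ∈ E, ∀ v ∈ J, 1 ≤ jDist u v ∧ jDist u v ≤ d - s := by
    simp only [E, J, mem_image, mem_filter, mem_powerset]
    rintro _ ⟨A, ⟨-, hA⟩, rfl⟩ _ ⟨B, ⟨-, hB⟩, rfl⟩
    exact ⟨one_le_jDist_ofFinset_jokered (by omega), hP ▸ jDist_jokered_le _ P B⟩
  have hF : IsNeighborly (d - s) (E ∪ J) :=
    (isNeighborly_image_ofFinset (by omega)).union (hP ▸ isNeighborly_image_jokered P _) hEJ
  have hdisj : Disjoint E J := disjoint_left.mpr fun u hu hu' => by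
    simpa using (hEJ u hu u hu').1
  have hEcard : #E = #{A ∈ (univ : Finset (Fin d)).powerset | #A ≤ (d - s) / 2} :=
    card_image_of_injective _ ofFinset_injective
  have hJcard : #J = #{B ∈ Pᶜ.powerset | #B ≤ (d - s - 1) / 2} :=
    card_image_of_injOn ((jokered_injOn P).mono fun B hB => by simpa using (mem_filter.mp hB).1)
  have hEcount := two_pow_card_le (univ : Finset (Fin d)) ((d - s) / 2)
  have hJcount := two_pow_card_le Pᶜ ((d - s - 1) / 2)
  rw [card_univ, Fintype.card_fin] at hEcount
  rw [hPc] at hJcount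
  have hEmid := Nat.mul_le_mul_right (d.choose (d / 2))
    (show d - (2 * ((d - s) / 2) + 1) ≤ s by omega)
  have hJmid := Nat.mul_le_mul_right ((d - s).choose ((d - s) / 2))
    (show d - s - (2 * ((d - s - 1) / 2) + 1) ≤ 1 by omega)
  refine ⟨E ∪ J, hF, ?_⟩
  rw [card_union_of_disjoint hdisj]
  omega

lemma bddAbove_setOf_isNeighborly (k d : ℕ) :
    BddAbove {m | ∃ F : Finset (JString d), IsNeighborly k F ∧ #F = m} :=
  ⟨Fintype.card (JString d), by rintro _ ⟨F, -, rfl⟩; exact card_le_univ F⟩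

lemma card_le_nkd {k : ℕ} {F : Finset (JString d)} (hF : IsNeighborly k F) : #F ≤ nkd k d :=
  le_csSup (bddAbove_setOf_isNeighborly k d) ⟨F, hF, rfl⟩

lemma exists_isNeighborly_card_eq_nkd (k d : ℕ) :
    ∃ F : Finset (JString d), IsNeighborly k F ∧ #F = nkd k d :=
  Nat.sSup_mem (s := {m | ∃ F : Finset (JString d), IsNeighborly k F ∧ #F = m})
    ⟨0, ∅, by simp [IsNeighborly]⟩ (bddAbove_setOf_isNeighborly k d)

lemma two_pow_succ_mul_nkd_le {s : ℕ} (hsd : s ≤ d) :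
    2 ^ (s + 1) * nkd (d - s) d ≤ (2 ^ s + 1) * 2 ^ d := by
  obtain ⟨F, hF, hcard⟩ := exists_isNeighborly_card_eq_nkd (d - s) d
  exact hcard ▸ two_pow_succ_mul_card_le_of_isNeighborly hsd hF

lemma two_pow_add_two_pow_le_nkd {s : ℕ} (hsd : s < d) :
    2 ^ d + 2 ^ (d - s) ≤
      2 * nkd (d - s) d + s * d.choose (d / 2) + (d - s).choose ((d - s) / 2) := by
  obtain ⟨F, hF, hbound⟩ := exists_isNeighborly_two_pow_add_two_pow_le hsd
  have := card_le_nkd hF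
  omega

lemma sub_le_nkd_div_two_pow {s d : ℕ} (hsd : s < d) :
    (2 ^ s + 1) / 2 ^ (s + 1) - ((s / 2 : ℝ) * ((d.choose (d / 2) : ℝ) / 2 ^ d) +
      ((d - s).choose ((d - s) / 2) : ℝ) / 2 ^ (d - s) / 2 ^ (s + 1)) ≤
      (nkd (d - s) d : ℝ) / 2 ^ d := by
  have h : (2 : ℝ) ^ d + 2 ^ (d - s) ≤
      2 * nkd (d - s) d + s * d.choose (d / 2) + (d - s).choose ((d - s) / 2) := by
    exact_mod_cast two_pow_add_two_pow_le_nkd hsd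
  have h2d : (2 : ℝ) ^ d = 2 ^ s * 2 ^ (d - s) := by rw [← pow_add]; congr 1; omega
  rw [h2d] at h ⊢
  rw [pow_succ]
  field_simp
  linarith

end JokerString

theorem neighborly_limit_general (s : ℕ) :
    Filter.Tendsto (fun d : ℕ => (nkd (d - s) d : ℝ) / 2 ^ d) Filter.atTop
      (nhds ((2 ^ s + 1) / 2 ^ (s + 1))) := by
  have hc := tendsto_choose_half_div_two_pow
  have hlower := tendsto_const_nhds (x := ((2 : ℝ) ^ s + 1) / 2 ^ (s + 1)) |>.sub
    ((hc.const_mul (s / 2 : ℝ)).add ((hc.comp (tendsto_sub_atTop_nat s)).div_const (2 ^ (s + 1))))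
  rw [mul_zero, zero_div, add_zero, sub_zero] at hlower
  refine tendsto_of_tendsto_of_tendsto_of_le_of_le' hlower tendsto_const_nhds ?_ ?_
  · filter_upwards [eventually_gt_atTop s] with d hd
    exact JokerString.sub_le_nkd_div_two_pow hd
  · filter_upwards [eventually_ge_atTop s] with d hd
    rw [div_le_div_iff₀ (by positivity) (by positivity), mul_comm]
    exact_mod_cast JokerString.two_pow_succ_mul_nkd_le hd

/-- For every fixed positive integer `s`,
`lim_{d → ∞} n(d-s, d) / 2^d = (2^s + 1) / 2^{s+1}`. -/
theorem neighborly_limit (s : ℕ) (hs : 0 < s) :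
    Filter.Tendsto (fun d : ℕ => (nkd (d - s) d : ℝ) / 2 ^ d) Filter.atTop
      (nhds ((2 ^ s + 1) / 2 ^ (s + 1))) :=
  neighborly_limit_general s
end

section
/- Let s and d be positive integers with s ≤ d/2. Then n(d-s, d) ≤ (1/2 + 1/2^{s+1}) · 2^d. -/
/-!
Give each string `u` the weight `2^{-j(u)}`, where `j(u)` is its number of jokers, and spread it
evenly over the `2^{j(u)}` binary words completing `u`; the total weight is `|F|`. Strings at
distance at least `1` share no completion, so a binary word `x` receives the weight of at most one
member of `F`. If `u` completes to `x` and `v` to its complement, then every position where neither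
has a joker contributes to `dist(u,v) ≤ d - s`, whence `j(u) + j(v) ≥ s` and
`2^{-j(u)} + 2^{-j(v)} ≤ 1 + 2^{-s}`. Summing over the `2^{d-1}` complementary pairs gives the
bound.
-/

open Finset

def IsNeighborly {d : ℕ} (k : ℕ) (F : Finset (JString d)) : Prop :=
  ∀ u ∈ F, ∀ v ∈ F, u ≠ v → 1 ≤ jDist u v ∧ jDist u v ≤ k

theorem exists_isNeighborly_card_eq_nkd (k d : ℕ) :
    ∃ F : Finset (JString d), IsNeighborly k F ∧ #F = nkd k d :=
  Nat.sSup_mem (s := {m | ∃ F : Finset (JString d), IsNeighborly k F ∧ #F = m})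
    ⟨0, ∅, by simp [IsNeighborly], rfl⟩
    ⟨Fintype.card (JString d), by rintro _ ⟨F, -, rfl⟩; exact F.card_le_univ⟩

theorem one_div_two_pow_le_one (a : ℕ) : (1 : ℝ) / 2 ^ a ≤ 1 := by
  rw [← one_div_pow]
  exact pow_le_one₀ (by norm_num) (by norm_num)

theorem one_div_two_pow_add_one_div_two_pow_le {a b s : ℕ} (h : s ≤ a + b) :
    (1 : ℝ) / 2 ^ a + 1 / 2 ^ b ≤ 1 + 1 / 2 ^ s := by
  have ha := one_div_two_pow_le_one a
  have hb := one_div_two_pow_le_one b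
  have hab : (1 : ℝ) / 2 ^ (a + b) ≤ 1 / 2 ^ s :=
    one_div_pow_le_one_div_pow_of_le (by norm_num) h
  rw [pow_add, ← one_div_mul_one_div] at hab
  nlinarith [mul_nonneg (sub_nonneg.2 ha) (sub_nonneg.2 hb)]

namespace JString

variable {d : ℕ}

def numJokers (u : JString d) : ℕ := #{i | u i = none}

def IsCompletion (x : Fin d → Bool) (u : JString d) : Prop :=
  ∀ i, u i = none ∨ u i = some (x i)

instance (x : Fin d → Bool) (u : JString d) : Decidable (IsCompletion x u) :=
  inferInstanceAs (Decidable (∀ _, _))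

theorem card_isCompletion (u : JString d) : #{x | IsCompletion x u} = 2 ^ numJokers u := by
  have hpi : univ.filter (IsCompletion · u)
      = Fintype.piFinset fun i => {a | u i = none ∨ u i = some a} := by
    ext x
    simp only [mem_filter, mem_univ, true_and, Fintype.mem_piFinset]
    rfl
  have hfactor (i : Fin d) : #{a | u i = none ∨ u i = some a} = if u i = none then 2 else 1 := by
    cases u i <;> simp [filter_eq]
  rw [hpi, Fintype.card_piFinset, prod_congr rfl fun i _ => hfactor i, prod_ite, prod_const,
    prod_const, one_pow, mul_one, numJokers]

theorem jDist_eq_zero_of_isCompletion {x : Fin d → Bool} {u v : JString d}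
    (hu : IsCompletion x u) (hv : IsCompletion x v) : jDist u v = 0 := by
  rw [jDist, card_eq_zero, filter_eq_empty_iff]
  rintro i - ⟨a, b, ha, hb, hab⟩
  rcases hu i with h | h <;> rcases hv i with h' | h' <;> simp_all

theorem jDist_self (u : JString d) : jDist u u = 0 := by
  rw [jDist, card_eq_zero, filter_eq_empty_iff]
  rintro i - ⟨a, b, ha, hb, hab⟩
  exact hab (Option.some_inj.1 (ha.symm.trans hb))

theorem le_numJokers_add_numJokers_add_jDist {x : Fin d → Bool} {u v : JString d}
    (hu : IsCompletion x u) (hv : IsCompletion (fun i => !x i) v) :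
    d ≤ numJokers u + numJokers v + jDist u v := by
  have hcover : univ ⊆ univ.filter (fun i => u i = none) ∪ univ.filter (fun i => v i = none)
      ∪ univ.filter fun i => ∃ a b : Bool, u i = some a ∧ v i = some b ∧ a ≠ b := by
    intro i _
    simp only [mem_union, mem_filter, mem_univ, true_and]
    rcases hu i with h | h
    · exact .inl (.inl h)
    rcases hv i with h' | h'
    · exact .inl (.inr h')
    · exact .inr ⟨x i, !x i, h, h', by simp⟩
  calc d = #(univ : Finset (Fin d)) := by simp
    _ ≤ _ := card_le_card hcover
    _ ≤ _ := (card_union_le _ _).trans (Nat.add_le_add_right (card_union_le _ _) _)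

noncomputable def coverWeight (F : Finset (JString d)) (x : Fin d → Bool) : ℝ :=
  ∑ u ∈ F with IsCompletion x u, 1 / 2 ^ numJokers u

theorem sum_coverWeight (F : Finset (JString d)) : ∑ x, coverWeight F x = #F := by
  simp_rw [coverWeight, sum_filter]
  rw [sum_comm]
  have hone (u : JString d) :
      ∑ x, (if IsCompletion x u then (1 : ℝ) / 2 ^ numJokers u else 0) = 1 := by
    rw [← sum_filter, sum_const, card_isCompletion, nsmul_eq_mul]
    push_cast
    field_simp
  rw [sum_congr rfl fun u _ => hone u]
  simp

theorem coverWeight_eq_zero_or {k : ℕ} {F : Finset (JString d)} (hF : IsNeighborly k F)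
    (x : Fin d → Bool) :
    coverWeight F x = 0 ∨
      ∃ u ∈ F, IsCompletion x u ∧ coverWeight F x = 1 / 2 ^ numJokers u := by
  by_cases h : ∃ u ∈ F, IsCompletion x u
  · obtain ⟨u, hu, hxu⟩ := h
    refine .inr ⟨u, hu, hxu, sum_eq_single_of_mem u (mem_filter.2 ⟨hu, hxu⟩) ?_⟩
    intro v hv hvu
    rw [mem_filter] at hv
    have := (hF v hv.1 u hu hvu).1
    rw [jDist_eq_zero_of_isCompletion hv.2 hxu] at this
    omega
  · push Not at h
    exact .inl (sum_eq_zero fun u hu => absurd (mem_filter.1 hu).2 (h u (mem_filter.1 hu).1))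

theorem coverWeight_add_coverWeight_not_le {s : ℕ} {F : Finset (JString d)}
    (hF : IsNeighborly (d - s) F) (hs : s ≤ d) (x : Fin d → Bool) :
    coverWeight F x + coverWeight F (fun i => !x i) ≤ 1 + 1 / 2 ^ s := by
  have hpos : (0 : ℝ) ≤ 1 / 2 ^ s := by positivity
  rcases coverWeight_eq_zero_or hF x with h | ⟨u, hu, hxu, h⟩ <;>
    rcases coverWeight_eq_zero_or hF (fun i => !x i) with h' | ⟨v, hv, hxv, h'⟩ <;>
    rw [h, h']
  · linarith
  · linarith [one_div_two_pow_le_one (numJokers v)]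
  · linarith [one_div_two_pow_le_one (numJokers u)]
  refine one_div_two_pow_add_one_div_two_pow_le ?_
  have hdist : jDist u v ≤ d - s := by
    obtain rfl | huv := eq_or_ne u v
    · rw [jDist_self]; exact Nat.zero_le _
    · exact (hF u hu v hv huv).2
  have := le_numJokers_add_numJokers_add_jDist hxu hxv
  omega

end JString

open JString in
theorem IsNeighborly.card_le {s d : ℕ} {F : Finset (JString d)} (hF : IsNeighborly (d - s) F)
    (hs : s ≤ d) : (#F : ℝ) ≤ (1 / 2 + 1 / 2 ^ (s + 1)) * 2 ^ d := by
  have hnot : Function.Involutive fun x : Fin d → Bool => fun i => !x i :=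
    fun x => funext fun i => Bool.not_not (x i)
  have hsum : 2 * ∑ x, coverWeight F x ≤ 2 ^ d * (1 + 1 / 2 ^ s) :=
    calc 2 * ∑ x, coverWeight F x = ∑ x, (coverWeight F x + coverWeight F fun i => !x i) := by
          rw [sum_add_distrib, two_mul,
            Fintype.sum_bijective _ hnot.bijective (fun x => coverWeight F fun i => !x i)
              (coverWeight F) fun x => rfl]
      _ ≤ ∑ _x : Fin d → Bool, (1 + 1 / 2 ^ s) :=
          sum_le_sum fun x _ => coverWeight_add_coverWeight_not_le hF hs x
      _ = 2 ^ d * (1 + 1 / 2 ^ s) := by simp [mul_add]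
  rw [sum_coverWeight] at hsum
  have hrhs : (1 / 2 + 1 / 2 ^ (s + 1) : ℝ) * 2 ^ d = 2 ^ d * (1 + 1 / 2 ^ s) / 2 := by
    rw [pow_succ]; field_simp
  rw [hrhs]
  linarith

theorem neighborly_upper_bound_general (s d : ℕ) (hsd : 2 * s ≤ d) :
    (nkd (d - s) d : ℝ) ≤ (1 / 2 + 1 / 2 ^ (s + 1)) * 2 ^ d := by
  obtain ⟨F, hF, hcard⟩ := exists_isNeighborly_card_eq_nkd (d - s) d
  rw [← hcard]
  exact hF.card_le (by omega)

/-- Let `s` and `d` be positive integers with `s ≤ d/2`. Then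
`n(d-s, d) ≤ (1/2 + 1/2^{s+1}) · 2^d`. -/
theorem neighborly_upper_bound (s d : ℕ) (hs : 0 < s) (hd : 0 < d) (hsd : 2 * s ≤ d) :
    (nkd (d - s) d : ℝ) ≤ (1 / 2 + 1 / 2 ^ (s + 1)) * 2 ^ d :=
  neighborly_upper_bound_general s d hsd
end

section
/- Let s and d be even positive integers with 2s ≤ d. Then n(d-s, d) ≥ (1/2 + 1/2^{s+1}) · (1 - s/√(π(d-s)/2)) · 2^d. -/
/-! Write `d = s + 2t` and fix a set `J` of `s` positions. The family consists of all binary strings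
of weight at most `t`, together with the strings that have jokers on `J` and more than `t` ones
on the other `2t` positions. Two members differ only where neither has a joker, so all distances
are at most `2t = d - s`; members of different kinds differ somewhere because outside `J` a
string of weight at most `t` cannot match more than `t` ones. Complementation `S ↦ Sᶜ` pairs the
layers of the Boolean lattice, so the first kind covers half of `2^d` minus the `s - 1` middle
layers and the second kind half of `2^{2t}` minus its middle layer. Since the Stirling sequence
decreases to `√π`, `C(2n, n) √(πn) ≤ 4^n`, which turns these losses into the factor
`1 - s/√(πt)`. -/

open Finset Real Stirling
open scoped Nat

namespace Stirling

theorem factorial_eq_stirlingSeq_mul {n : ℕ} (hn : n ≠ 0) :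
    (n ! : ℝ) = stirlingSeq n * (√(2 * n) * (n / exp 1) ^ n) := by
  rw [stirlingSeq, div_mul_cancel₀]
  positivity

end Stirling

namespace Nat

theorem centralBinom_mul_sqrt_mul_stirlingSeq_sq {n : ℕ} (hn : n ≠ 0) :
    (centralBinom n : ℝ) * √n * stirlingSeq n ^ 2 = 4 ^ n * stirlingSeq (2 * n) := by
  have hfac : (centralBinom n : ℝ) * n ! * n ! = (2 * n)! := by
    rw [centralBinom, two_mul]; exact_mod_cast add_choose_mul_factorial_mul_factorial n n
  rw [factorial_eq_stirlingSeq_mul hn, factorial_eq_stirlingSeq_mul (by omega)] at hfac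
  have hsqrt : √(2 * ((2 * n : ℕ) : ℝ)) = 2 * √n := by
    rw [show 2 * ((2 * n : ℕ) : ℝ) = 2 ^ 2 * n by push_cast; ring, sqrt_mul' _ (by positivity),
      sqrt_sq (by norm_num)]
  have hpow : (((2 * n : ℕ) : ℝ) / exp 1) ^ (2 * n) = 4 ^ n * ((n / exp 1) ^ n) ^ 2 := by
    push_cast; rw [mul_div_assoc, mul_pow, pow_mul, pow_mul']; norm_num
  rw [hsqrt, hpow, sqrt_mul' _ (Nat.cast_nonneg n)] at hfac
  have h2 : √(2 : ℝ) ^ 2 = 2 := sq_sqrt (by norm_num)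
  apply mul_right_cancel₀ (b := 2 * √n * ((n / exp 1) ^ n) ^ 2) (by positivity)
  linear_combination
    hfac - (centralBinom n * stirlingSeq n ^ 2 * √n ^ 2 * ((n / exp 1) ^ n) ^ 2) * h2

theorem centralBinom_mul_sqrt_pi_mul_le_four_pow (n : ℕ) :
    (centralBinom n : ℝ) * √(π * n) ≤ 4 ^ n := by
  obtain rfl | hn := eq_or_ne n 0
  · simp
  have hpi := sqrt_pi_le_stirlingSeq hn
  have hmono : stirlingSeq (2 * n) ≤ stirlingSeq n := by
    obtain ⟨m, rfl⟩ := exists_eq_succ_of_ne_zero hn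
    exact stirlingSeq'_antitone (show m ≤ 2 * m + 1 by omega)
  have hpos : 0 < stirlingSeq n := (Real.sqrt_pos.2 pi_pos).trans_le hpi
  refine le_of_mul_le_mul_right ?_ hpos
  calc (centralBinom n : ℝ) * √(π * n) * stirlingSeq n
      = centralBinom n * √n * stirlingSeq n * √π := by rw [sqrt_mul pi_pos.le]; ring
    _ ≤ centralBinom n * √n * stirlingSeq n * stirlingSeq n := by gcongr
    _ = 4 ^ n * stirlingSeq (2 * n) := by
        rw [← centralBinom_mul_sqrt_mul_stirlingSeq_sq hn]; ring
    _ ≤ 4 ^ n * stirlingSeq n := by gcongr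

end Nat

section PowersetByCard

variable {α : Type*} (D : Finset α)

theorem card_powerset_filter_card_eq_card_sub [DecidableEq α] (p : ℕ → Prop)
    [DecidablePred p] :
    #{S ∈ D.powerset | p #S} = #{S ∈ D.powerset | p (#D - #S)} := by
  refine card_nbij' (D \ ·) (D \ ·) ?_ ?_ ?_ ?_
  · intro S hS
    simp only [coe_filter, mem_powerset, Set.mem_ofPred_eq] at hS ⊢
    refine ⟨sdiff_subset, ?_⟩
    rw [card_sdiff_of_subset hS.1, Nat.sub_sub_self (card_le_card hS.1)]
    exact hS.2
  · intro S hS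
    simp only [coe_filter, mem_powerset, Set.mem_ofPred_eq] at hS ⊢
    exact ⟨sdiff_subset, by rw [card_sdiff_of_subset hS.1]; exact hS.2⟩
  all_goals
    exact fun S hS => Finset.sdiff_sdiff_eq_self (mem_powerset.1 (mem_filter.1 hS).1)

theorem card_powerset_filter_card_mem (K : Finset ℕ) :
    #{S ∈ D.powerset | #S ∈ K} = ∑ k ∈ K, (#D).choose k := by
  rw [card_eq_sum_card_fiberwise (s := {S ∈ D.powerset | #S ∈ K}) (f := card) (t := K)
    fun S hS => (mem_filter.1 hS).2]
  refine sum_congr rfl fun k hk => ?_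
  rw [← card_powersetCard, powersetCard_eq_filter, filter_filter]
  congr 1
  refine filter_congr fun S _ => ?_
  constructor
  · exact And.right
  · rintro rfl; exact ⟨hk, rfl⟩

theorem card_powerset_filter_card_lt_eq [DecidableEq α] {a b : ℕ} (hD : a + b = #D) :
    #{S ∈ D.powerset | #S < a} = #{S ∈ D.powerset | b < #S} := by
  rw [card_powerset_filter_card_eq_card_sub]
  congr 1
  refine filter_congr fun S hS => ?_
  have := card_le_card (mem_powerset.1 hS)
  omega

theorem two_mul_card_powerset_filter_lt_card_add_sum_choose [DecidableEq α] {a b : ℕ}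
    (hab : a ≤ b + 1) (hD : a + b = #D) :
    2 * #{S ∈ D.powerset | b < #S} + ∑ k ∈ Icc a b, (#D).choose k = 2 ^ #D := by
  have hmid :
      {S ∈ {S ∈ D.powerset | ¬ #S < a} | #S ≤ b} = {S ∈ D.powerset | #S ∈ Icc a b} := by
    rw [filter_filter]
    exact filter_congr fun S _ => by rw [mem_Icc]; omega
  have hhigh :
      {S ∈ {S ∈ D.powerset | ¬ #S < a} | ¬ #S ≤ b} = {S ∈ D.powerset | b < #S} := by
    rw [filter_filter]
    exact filter_congr fun S _ => by omega
  have hsplit_low := card_filter_add_card_filter_not (s := D.powerset) (fun S => #S < a)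
  have hsplit_high := card_filter_add_card_filter_not (s := {S ∈ D.powerset | ¬ #S < a})
    (fun S => #S ≤ b)
  rw [hmid, hhigh, card_powerset_filter_card_mem] at hsplit_high
  rw [card_powerset, card_powerset_filter_card_lt_eq D hD] at hsplit_low
  omega

end PowersetByCard

theorem not_symmDiff_subset_of_card_lt {α : Type*} [DecidableEq α] {J S S' : Finset α}
    (hS' : Disjoint S' J) (hlt : #S < #S') : ¬ symmDiff S S' ⊆ J := by
  intro h
  have hsub : S' ⊆ S := fun x hx => by
    by_contra hxS
    exact disjoint_left.1 hS' hx (h (mem_symmDiff.2 (.inr ⟨hx, hxS⟩)))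
  exact (card_le_card hsub).not_gt hlt

section JokerStrings

variable {d : ℕ}

theorem jDist_comm (u v : JString d) : jDist u v = jDist v u := by
  unfold jDist
  congr 1
  ext i
  simp only [mem_filter, mem_univ, true_and]
  exact ⟨fun ⟨a, b, ha, hb, hab⟩ => ⟨b, a, hb, ha, hab.symm⟩,
    fun ⟨a, b, ha, hb, hab⟩ => ⟨b, a, hb, ha, hab.symm⟩⟩

theorem jDist_self (u : JString d) : jDist u u = 0 := by
  simp only [jDist, card_eq_zero, filter_eq_empty_iff]
  rintro i - ⟨a, b, ha, hb, hab⟩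
  exact hab (Option.some.inj (ha.symm.trans hb))

def jokerString (J S : Finset (Fin d)) : JString d :=
  fun i => if i ∈ J then none else some (decide (i ∈ S))

theorem jDist_jokerString (J J' S S' : Finset (Fin d)) :
    jDist (jokerString J S) (jokerString J' S') = #(symmDiff S S' \ (J ∪ J')) := by
  unfold jDist
  congr 1
  ext i
  by_cases hJ : i ∈ J <;> by_cases hJ' : i ∈ J' <;> by_cases hS : i ∈ S <;>
    by_cases hS' : i ∈ S' <;> simp [jokerString, mem_symmDiff, *]

theorem card_le_nkd {k : ℕ} {ι : Type*} (s : Finset ι) (g : ι → JString d)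
    (h : ∀ x ∈ s, ∀ y ∈ s, x ≠ y →
      1 ≤ jDist (g x) (g y) ∧ jDist (g x) (g y) ≤ k) :
    #s ≤ nkd k d := by
  have hinj : Set.InjOn g s := fun x hx y hy hxy => by
    by_contra hne
    have := (h x hx y hy hne).1
    rw [hxy, jDist_self] at this
    omega
  rw [← card_image_of_injOn hinj]
  refine le_csSup ⟨Fintype.card (JString d), ?_⟩ ⟨s.image g, ?_, rfl⟩
  · rintro m ⟨F, -, rfl⟩
    exact card_le_univ F
  · simp only [mem_image]
    rintro _ ⟨x, hx, rfl⟩ _ ⟨y, hy, rfl⟩ hne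
    exact h x hx y hy (fun hxy => hne (hxy ▸ rfl))

theorem jDist_jokerString_le_card_compl (J J' S S' : Finset (Fin d)) :
    jDist (jokerString J S) (jokerString J' S') ≤ #J'ᶜ := by
  rw [jDist_jokerString]
  refine card_le_card fun i hi => ?_
  simp only [mem_sdiff, mem_union, not_or] at hi
  exact mem_compl.2 hi.2.2

theorem card_add_card_le_nkd (J : Finset (Fin d)) (t : ℕ) (ht : 2 * t ≤ #Jᶜ) :
    #{S ∈ (univ : Finset (Fin d)).powerset | #S ≤ t} + #{S ∈ Jᶜ.powerset | t < #S}
      ≤ nkd #Jᶜ d := by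
  rw [← card_disjSum]
  refine card_le_nkd _ (Sum.elim (jokerString ∅) (jokerString J)) ?_
  have hAB : ∀ S S' : Finset (Fin d), #S ≤ t → S' ⊆ Jᶜ → t < #S' →
      1 ≤ jDist (jokerString ∅ S) (jokerString J S') ∧
        jDist (jokerString ∅ S) (jokerString J S') ≤ #Jᶜ := by
    intro S S' hS hS' hS't
    refine ⟨?_, jDist_jokerString_le_card_compl _ _ _ _⟩
    rw [jDist_jokerString, empty_union]
    exact card_pos.2 <| sdiff_nonempty.2 <|
      not_symmDiff_subset_of_card_lt (subset_compl_iff_disjoint_right.1 hS') (by omega)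
  rintro (S | S) hx (S' | S') hy hne <;>
    simp only [inl_mem_disjSum, inr_mem_disjSum, mem_filter, mem_powerset, Sum.elim_inl,
      Sum.elim_inr, ne_eq, Sum.inl.injEq, Sum.inr.injEq] at hx hy hne ⊢
  · rw [jDist_jokerString, union_empty, sdiff_empty]
    refine ⟨card_pos.2 (symmDiff_nonempty.2 hne), ?_⟩
    calc #(symmDiff S S') ≤ #(S ∪ S') := card_le_card symmDiff_subset_union
      _ ≤ #S + #S' := card_union_le S S'
      _ ≤ #Jᶜ := by omega
  · exact hAB S S' hx.2 hy.1 hy.2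
  · rw [jDist_comm]; exact hAB S' S hy.2 hx.1 hx.2
  · refine ⟨?_, jDist_jokerString_le_card_compl _ _ _ _⟩
    rw [jDist_jokerString, union_self, sdiff_eq_self_of_disjoint]
    · exact card_pos.2 (symmDiff_nonempty.2 hne)
    · exact subset_compl_iff_disjoint_right.1 <|
        symmDiff_subset_union.trans (union_subset hx.1 hy.1)

end JokerStrings

theorem two_pow_add_two_pow_le_two_mul_nkd (s t : ℕ) (hs : 0 < s) :
    2 ^ (s + 2 * t) + 2 ^ (2 * t) ≤ 2 * nkd (2 * t) (s + 2 * t)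
      + (s - 1) * (s + 2 * t).choose ((s + 2 * t) / 2) + Nat.centralBinom t := by
  set d := s + 2 * t
  obtain ⟨J, -, hJ⟩ := exists_subset_card_eq (show s ≤ #(univ : Finset (Fin d)) by simp [d])
  have hJc : #Jᶜ = 2 * t := by rw [card_compl, hJ, Fintype.card_fin]; omega
  have hnkd := card_add_card_le_nkd J t hJc.ge
  have hlow : #{S ∈ (univ : Finset (Fin d)).powerset | #S ≤ t}
      = #{S ∈ (univ : Finset (Fin d)).powerset | t + s - 1 < #S} := by
    rw [← card_powerset_filter_card_lt_eq _ (a := t + 1) (by simp [d]; omega)]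
    simp only [Nat.lt_succ_iff]
  have hA := two_mul_card_powerset_filter_lt_card_add_sum_choose (univ : Finset (Fin d))
    (a := t + 1) (b := t + s - 1) (by omega) (by simp [d]; omega)
  have hB := two_mul_card_powerset_filter_lt_card_add_sum_choose Jᶜ (a := t) (b := t) le_self_add
    (by omega)
  have hmid : ∑ k ∈ Icc (t + 1) (t + s - 1), d.choose k ≤ (s - 1) * d.choose (d / 2) := by
    refine (sum_le_card_nsmul _ _ _ fun k _ => Nat.choose_le_middle k d).trans_eq ?_
    rw [Nat.card_Icc, smul_eq_mul]
    congr 1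
    omega
  rw [hJc, Icc_self, sum_singleton, ← Nat.centralBinom_eq_two_mul_choose] at hB
  rw [hJc, hlow] at hnkd
  simp only [card_univ, Fintype.card_fin] at hA hmid
  omega

theorem nkd_two_mul_lower_bound (s t : ℕ) (hs : 0 < s) (ht : 0 < t) (hse : Even s) :
    ((1 : ℝ) / 2 + 1 / 2 ^ (s + 1)) * (1 - s / √(π * t)) * 2 ^ (s + 2 * t)
      ≤ nkd (2 * t) (s + 2 * t) := by
  obtain ⟨m, hm⟩ : ∃ m, s + 2 * t = 2 * m := by
    obtain ⟨a, rfl⟩ := hse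
    exact ⟨a + t, by ring⟩
  have hcount := two_pow_add_two_pow_le_two_mul_nkd s t hs
  rw [hm, Nat.mul_div_cancel_left m two_pos, ← Nat.centralBinom_eq_two_mul_choose] at hcount
  rw [hm]
  set X : ℝ := 2 ^ (2 * m)
  set Y : ℝ := 2 ^ (2 * t)
  have hx0 : 0 < √(π * t) := by positivity
  have hC1 : (Nat.centralBinom m : ℝ) * √(π * t) ≤ X := by
    calc (Nat.centralBinom m : ℝ) * √(π * t) ≤ Nat.centralBinom m * √(π * m) := by
          gcongr
          exact_mod_cast (by omega : t ≤ m)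
      _ ≤ 4 ^ m := Nat.centralBinom_mul_sqrt_pi_mul_le_four_pow m
      _ = X := by norm_num [X, pow_mul]
  have hC2 : (Nat.centralBinom t : ℝ) * √(π * t) ≤ Y := by
    calc (Nat.centralBinom t : ℝ) * √(π * t) ≤ 4 ^ t :=
          Nat.centralBinom_mul_sqrt_pi_mul_le_four_pow t
      _ = Y := by norm_num [Y, pow_mul]
  have hN : X + Y ≤ 2 * nkd (2 * t) (2 * m) + ((s : ℝ) - 1) * Nat.centralBinom m
      + Nat.centralBinom t := by
    have := (Nat.cast_le (α := ℝ)).2 hcount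
    push_cast [Nat.cast_sub hs] at this
    exact this
  have hcoef : ((1 : ℝ) / 2 + 1 / 2 ^ (s + 1)) * X = (X + Y) / 2 := by
    rw [show X = 2 ^ s * Y by simp only [X, Y, ← hm, pow_add], pow_succ]
    field_simp
  have hs1 : (1 : ℝ) ≤ s := by exact_mod_cast hs
  have hsplit : (X + Y) / 2 * (1 - s / √(π * t))
      = ((X + Y) * √(π * t) - s * (X + Y)) / (2 * √(π * t)) := by
    field_simp
  rw [mul_right_comm, hcoef, hsplit, div_le_iff₀ (by positivity)]
  nlinarith [mul_le_mul_of_nonneg_right hN hx0.le,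
    mul_le_mul_of_nonneg_left hC1 (sub_nonneg.2 hs1),
    mul_nonneg (sub_nonneg.2 hs1) (by positivity : (0 : ℝ) ≤ Y)]

theorem neighborly_asymptotic_lower_bound_general (s d : ℕ) (hs : 0 < s)
    (hse : Even s) (hde : Even d) (hsd : 2 * s ≤ d) :
    ((1 : ℝ) / 2 + 1 / 2 ^ (s + 1)) *
        (1 - (s : ℝ) / Real.sqrt (Real.pi * ((d : ℝ) - (s : ℝ)) / 2)) * 2 ^ d
      ≤ (nkd (d - s) d : ℝ) := by
  obtain ⟨t, rfl⟩ : ∃ t, d = s + 2 * t := by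
    obtain ⟨a, rfl⟩ := hse
    obtain ⟨b, rfl⟩ := hde
    exact ⟨b - a, by omega⟩
  have hsqrt : π * (((s + 2 * t : ℕ) : ℝ) - s) / 2 = π * t := by
    push_cast
    ring
  rw [hsqrt, Nat.add_sub_cancel_left]
  exact nkd_two_mul_lower_bound s t hs (by omega) hse

/-- Let `s` and `d` be even positive integers with `2s ≤ d`. Then
`n(d-s, d) ≥ (1/2 + 1/2^{s+1}) · (1 - s/√(π(d-s)/2)) · 2^d`. -/
theorem neighborly_asymptotic_lower_bound (s d : ℕ) (hs : 0 < s) (hd : 0 < d)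
    (hse : Even s) (hde : Even d) (hsd : 2 * s ≤ d) :
    ((1 : ℝ) / 2 + 1 / 2 ^ (s + 1)) *
        (1 - (s : ℝ) / Real.sqrt (Real.pi * ((d : ℝ) - (s : ℝ)) / 2)) * 2 ^ d
      ≤ (nkd (d - s) d : ℝ) :=
  neighborly_asymptotic_lower_bound_general s d hs hse hde hsd
end

section
/- Let s > 1 be an integer and let k ∈ {1, 2, …, s-1}. Then the indexed family {A_ε : ε ∈ I^s, |ε| = k} defines a partition of I^{s-1}; that is, the sets A_ε with |ε| = k are pairwise disjoint (for distinct indices ε) and their union is all of I^{s-1}. -/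
/-- The weight `|x|` of a binary string. -/
def wt {n : ℕ} (x : Fin n → Bool) : ℕ := (Finset.univ.filter fun i => x i = true).card

/-- The inner product `⟨x,y⟩` of two binary strings. -/
def ip {n : ℕ} (x y : Fin n → Bool) : ℕ :=
  (Finset.univ.filter fun i => x i = true ∧ y i = true).card

/-- The antipode `x̄` of a binary string. -/
def antipode {n : ℕ} (x : Fin n → Bool) : Fin n → Bool := fun i => !(x i)

/-- `t(ε)` (0-based): the largest index at which `ε` differs from its last entry; for
nonconstant `ε` this is the unique (0-based) index `i` with `ε i ≠ ε (i+1) = ⋯ = ε (s-1)`. -/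
noncomputable def tIdx {s : ℕ} (ε : Fin s → Bool) : ℕ :=
  sSup {i : ℕ | ∃ h : i < s, ∃ h' : s - 1 < s, ε ⟨i, h⟩ ≠ ε ⟨s - 1, h'⟩}

/-- The set `A_ε = {ε_1} × ⋯ × {ε_{t(ε)}} × I^{s-1-t(ε)} ⊆ I^{s-1}`. -/
def Aset {s : ℕ} (ε : Fin s → Bool) : Set (Fin (s - 1) → Bool) :=
  {x | ∀ j : Fin (s - 1), (j : ℕ) ≤ tIdx ε →
    x j = ε ⟨(j : ℕ), Nat.lt_of_lt_of_le j.isLt (Nat.sub_le s 1)⟩}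

/-- The sets `X_k ⊆ I^{d-s}`: `X_0 = {|x| ≤ d/2 - s}`, `X_k = {|x| = d/2 - s + k}` for
`0 < k < s`, and `X_s = {|x| ≥ d/2}`. -/
def Xk (d s k : ℕ) : Set (Fin (d - s) → Bool) :=
  if k = 0 then {x | wt x ≤ d / 2 - s}
  else if k = s then {x | d / 2 ≤ wt x}
  else {x | wt x = d / 2 - s + k}

/-- The last `m` coordinates of a binary string of length `n` (junk values if `m > n`). -/
def suffix (m : ℕ) {n : ℕ} (x : Fin n → Bool) : Fin m → Bool :=
  fun j => if h : n - m + (j : ℕ) < n then x ⟨n - m + (j : ℕ), h⟩ else false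

/-- The set `B_ε ⊆ I^{d-s}`: `B_α = X_0`, `B_ω = X_s`, and for `ε ∉ {α,ω}`,
`B_ε = X_{|ε|} ∩ (I^{d-2s+1} × A_ε)`, identifying `I^{d-s}` with `I^{d-2s+1} × I^{s-1}`. -/
def Bset (d : ℕ) {s : ℕ} (ε : Fin s → Bool) : Set (Fin (d - s) → Bool) :=
  if ε = (fun _ => false) then Xk d s 0
  else if ε = (fun _ => true) then Xk d s s
  else Xk d s (wt ε) ∩ {x | suffix (s - 1) x ∈ Aset ε}

/-- Concatenation of a binary string of length `d - s` with a string over `{0,1,*}` of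
length `s`, producing a string over `{0,1,*}` of length `d`. -/
def glue {d s : ℕ} (x : Fin (d - s) → Bool) (w : Fin s → Option Bool) : JString d :=
  fun i => if h : (i : ℕ) < d - s then some (x ⟨(i : ℕ), h⟩)
    else if h' : (i : ℕ) - (d - s) < s then w ⟨(i : ℕ) - (d - s), h'⟩ else none

/-- The set `*^ε = *^{ε_1} × ⋯ × *^{ε_s} ⊆ S^s`, where `*^0 = {*}` and `*^1 = {0,1}`. -/
def starSet {s : ℕ} (ε : Fin s → Bool) : Set (Fin s → Option Bool) :=
  {w | ∀ j, if ε j = true then ∃ b : Bool, w j = some b else w j = none}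

/-- The set `C_ε = B_ε × *^ε ⊆ S^d`. -/
def Cset (d : ℕ) {s : ℕ} (ε : Fin s → Bool) : Set (JString d) :=
  {u | ∃ x ∈ Bset d ε, ∃ w ∈ starSet ε, u = glue x w}

section Helpers
variable {s : ℕ}

lemma tIdx_bdd (ε : Fin s → Bool) :
    BddAbove {i : ℕ | ∃ h : i < s, ∃ h' : s - 1 < s, ε ⟨i, h⟩ ≠ ε ⟨s - 1, h'⟩} :=
  ⟨s, fun i hi => le_of_lt hi.1⟩

lemma tIdx_mem (ε : Fin s → Bool) (hs : 0 < s)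
    (hne : ∃ i : Fin s, ε i ≠ ε ⟨s - 1, Nat.sub_lt hs one_pos⟩) :
    ∃ h : tIdx ε < s, ε ⟨tIdx ε, h⟩ ≠ ε ⟨s - 1, Nat.sub_lt hs one_pos⟩ := by
  have hnonempty : {i : ℕ | ∃ h : i < s, ∃ h' : s - 1 < s, ε ⟨i, h⟩ ≠ ε ⟨s - 1, h'⟩}.Nonempty := by
    obtain ⟨i, hi⟩ := hne
    exact ⟨(i : ℕ), i.isLt, Nat.sub_lt hs one_pos, by simpa using hi⟩
  have hmem := Nat.sSup_mem hnonempty (tIdx_bdd ε)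
  obtain ⟨h, h', hd⟩ := hmem
  exact ⟨h, hd⟩

lemma tIdx_ub (ε : Fin s → Bool) (i : ℕ) (h : i < s) (h' : s - 1 < s)
    (hd : ε ⟨i, h⟩ ≠ ε ⟨s - 1, h'⟩) : i ≤ tIdx ε :=
  le_csSup (tIdx_bdd ε) ⟨h, h', hd⟩

/-- nonconstancy from weight -/
lemma nonconst_of_wt (ε : Fin s → Bool) (k : ℕ) (hs : 1 < s) (hw : wt ε = k)
    (hk1 : 1 ≤ k) (hk2 : k ≤ s - 1) :
    ∃ i : Fin s, ε i ≠ ε ⟨s - 1, Nat.sub_lt (by omega) one_pos⟩ := by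
  by_contra hcon
  push_neg at hcon
  rcases hb : ε ⟨s - 1, Nat.sub_lt (by omega) one_pos⟩ with _ | _
  · have : wt ε = 0 := by
      unfold wt
      rw [Finset.card_eq_zero, Finset.filter_eq_empty_iff]
      intro i _
      rw [hcon i, hb]; simp
    omega
  · have : wt ε = s := by
      unfold wt
      rw [Finset.filter_true_of_mem, Finset.card_univ, Fintype.card_fin]
      intro i _
      rw [hcon i, hb]
    omega

/-- tail equality -/
lemma tIdx_tail (ε : Fin s → Bool) (hs : 0 < s) (i : ℕ) (h : i < s) (hi : tIdx ε < i) :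
    ε ⟨i, h⟩ = ε ⟨s - 1, Nat.sub_lt hs one_pos⟩ := by
  by_contra hd
  exact absurd (tIdx_ub ε i h (Nat.sub_lt hs one_pos) hd) (by omega)

lemma tIdx_lt (ε : Fin s → Bool) (hs : 0 < s)
    (hne : ∃ i : Fin s, ε i ≠ ε ⟨s - 1, Nat.sub_lt hs one_pos⟩) :
    tIdx ε < s - 1 := by
  obtain ⟨h, hd⟩ := tIdx_mem ε hs hne
  rcases Nat.lt_or_ge (tIdx ε) (s - 1) with h1 | h1
  · exact h1
  · exfalso
    have : tIdx ε = s - 1 := by omega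
    apply hd
    congr 1
    exact Fin.ext this

end Helpers
lemma eq_of_common {s k : ℕ} (hs : 1 < s) (hk1 : 1 ≤ k) (hk2 : k ≤ s - 1)
    (ε γ : Fin s → Bool) (hε : wt ε = k) (hγ : wt γ = k)
    (hle : tIdx ε ≤ tIdx γ) (x : Fin (s - 1) → Bool)
    (hxε : x ∈ Aset ε) (hxγ : x ∈ Aset γ) : ε = γ := by
  have hs0 : 0 < s := by omega
  have hneε := nonconst_of_wt ε k hs hε hk1 hk2
  have hneγ := nonconst_of_wt γ k hs hγ hk1 hk2
  set t := tIdx ε with htdef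
  set t' := tIdx γ with ht'def
  have ht : t < s - 1 := tIdx_lt ε hs0 hneε
  have ht' : t' < s - 1 := tIdx_lt γ hs0 hneγ
  obtain ⟨htlt, hdε⟩ := tIdx_mem ε hs0 hneε
  obtain ⟨ht'lt, hdγ⟩ := tIdx_mem γ hs0 hneγ
  -- prefix equalities
  have hpε : ∀ i : ℕ, ∀ h : i < s - 1, i ≤ t → ε ⟨i, by omega⟩ = x ⟨i, h⟩ :=
    fun i h hi => (hxε ⟨i, h⟩ hi).symm
  have hpγ : ∀ i : ℕ, ∀ h : i < s - 1, i ≤ t' → γ ⟨i, by omega⟩ = x ⟨i, h⟩ :=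
    fun i h hi => (hxγ ⟨i, h⟩ hi).symm
  -- tail equalities
  have htailε : ∀ i : ℕ, ∀ h : i < s, t < i → ε ⟨i, h⟩ = !(x ⟨t, ht⟩) := by
    intro i h hi
    have h1 := tIdx_tail ε hs0 i h hi
    have h2 : ε ⟨t, by omega⟩ = x ⟨t, ht⟩ := hpε t ht le_rfl
    rw [h1]
    rw [h2] at hdε
    revert hdε; cases x ⟨t, ht⟩ <;> cases ε ⟨s - 1, Nat.sub_lt hs0 one_pos⟩ <;> simp
  have htailγ : ∀ i : ℕ, ∀ h : i < s, t' < i → γ ⟨i, h⟩ = !(x ⟨t', ht'⟩) := by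
    intro i h hi
    have h1 := tIdx_tail γ hs0 i h hi
    have h2 : γ ⟨t', by omega⟩ = x ⟨t', ht'⟩ := hpγ t' ht' le_rfl
    rw [h1]
    rw [h2] at hdγ
    revert hdγ; cases x ⟨t', ht'⟩ <;> cases γ ⟨s - 1, Nat.sub_lt hs0 one_pos⟩ <;> simp
  rcases eq_or_lt_of_le hle with heq | hlt
  · -- t = t' : ε = γ
    funext i
    by_cases hi : (i : ℕ) ≤ t
    · have hi' : (i : ℕ) < s - 1 := by omega
      have e1 : ε ⟨(i : ℕ), i.isLt⟩ = x ⟨(i : ℕ), hi'⟩ := hpε _ hi' hi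
      have e2 : γ ⟨(i : ℕ), i.isLt⟩ = x ⟨(i : ℕ), hi'⟩ := hpγ _ hi' (heq ▸ hi)
      exact e1.trans e2.symm
    · push_neg at hi
      have e1 : ε ⟨(i : ℕ), i.isLt⟩ = !(x ⟨t, ht⟩) := htailε _ i.isLt hi
      have e2 : γ ⟨(i : ℕ), i.isLt⟩ = !(x ⟨t', ht'⟩) := htailγ _ i.isLt (heq ▸ hi)
      have : (⟨t, ht⟩ : Fin (s - 1)) = ⟨t', ht'⟩ := Fin.ext heq
      rw [this] at e1
      exact e1.trans e2.symm
  · -- t < t' : contradiction via cardinalities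
    exfalso
    set Sε := Finset.univ.filter (fun i => ε i = true) with hSε
    set Sγ := Finset.univ.filter (fun i => γ i = true) with hSγ
    have hcardε : Sε.card = k := hε
    have hcardγ : Sγ.card = k := hγ
    -- the distinguished witness index
    rcases hb : x ⟨t, ht⟩ with _ | _
    · -- x t = false : Sγ ⊂ Sε
      have hsub : Sγ ⊆ Sε := by
        intro i hi
        simp only [hSε, hSγ, Finset.mem_filter, Finset.mem_univ, true_and] at hi ⊢
        by_cases hit : (i : ℕ) ≤ t
        · have hi' : (i : ℕ) < s - 1 := by omega
          have e1 : ε ⟨(i : ℕ), i.isLt⟩ = x ⟨(i : ℕ), hi'⟩ := hpε _ hi' hit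
          have e2 : γ ⟨(i : ℕ), i.isLt⟩ = x ⟨(i : ℕ), hi'⟩ := hpγ _ hi' (by omega)
          rw [show ε i = ε ⟨(i : ℕ), i.isLt⟩ from rfl, e1, ← e2]
          exact hi
        · push_neg at hit
          have := htailε (i : ℕ) i.isLt hit
          rw [hb] at this
          exact this
      obtain ⟨i₀, hi₀γ, hi₀ε⟩ : ∃ i₀ : Fin s, γ i₀ = false ∧ ε i₀ = true := by
        rcases hgl : γ ⟨s - 1, Nat.sub_lt hs0 one_pos⟩ with _ | _
        · refine ⟨⟨s - 1, Nat.sub_lt hs0 one_pos⟩, hgl, ?_⟩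
          have := htailε (s - 1) (Nat.sub_lt hs0 one_pos) (by omega)
          rw [hb] at this; exact this
        · refine ⟨⟨t', by omega⟩, ?_, ?_⟩
          · rw [hgl] at hdγ
            revert hdγ; cases γ ⟨t', by omega⟩ <;> simp
          · have := htailε t' (by omega) hlt
            rw [hb] at this; exact this
      have hss : Sγ ⊂ Sε := by
        rw [Finset.ssubset_iff_of_subset hsub]
        refine ⟨i₀, ?_, ?_⟩
        · simp [hSε, hi₀ε]
        · simp [hSγ, hi₀γ]
      have := Finset.card_lt_card hss
      omega
    · -- x t = true : Sε ⊂ Sγ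
      have hsub : Sε ⊆ Sγ := by
        intro i hi
        simp only [hSε, hSγ, Finset.mem_filter, Finset.mem_univ, true_and] at hi ⊢
        by_cases hit : (i : ℕ) ≤ t
        · have hi' : (i : ℕ) < s - 1 := by omega
          have e1 : ε ⟨(i : ℕ), i.isLt⟩ = x ⟨(i : ℕ), hi'⟩ := hpε _ hi' hit
          have e2 : γ ⟨(i : ℕ), i.isLt⟩ = x ⟨(i : ℕ), hi'⟩ := hpγ _ hi' (by omega)
          rw [show γ i = γ ⟨(i : ℕ), i.isLt⟩ from rfl, e2, ← e1]
          exact hi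
        · push_neg at hit
          have := htailε (i : ℕ) i.isLt hit
          rw [hb] at this
          rw [show ε i = ε ⟨(i : ℕ), i.isLt⟩ from rfl, this] at hi
          exact absurd hi (by simp)
      obtain ⟨i₀, hi₀γ, hi₀ε⟩ : ∃ i₀ : Fin s, γ i₀ = true ∧ ε i₀ = false := by
        rcases hgl : γ ⟨s - 1, Nat.sub_lt hs0 one_pos⟩ with _ | _
        · refine ⟨⟨t', by omega⟩, ?_, ?_⟩
          · rw [hgl] at hdγ
            revert hdγ; cases γ ⟨t', by omega⟩ <;> simp
          · have := htailε t' (by omega) hlt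
            rw [hb] at this; exact this
        · refine ⟨⟨s - 1, Nat.sub_lt hs0 one_pos⟩, hgl, ?_⟩
          have := htailε (s - 1) (Nat.sub_lt hs0 one_pos) (by omega)
          rw [hb] at this; exact this
      have hss : Sε ⊂ Sγ := by
        rw [Finset.ssubset_iff_of_subset hsub]
        refine ⟨i₀, ?_, ?_⟩
        · simp [hSγ, hi₀γ]
        · simp [hSε, hi₀ε]
      have := Finset.card_lt_card hss
      omega
/-- existence of the `k`-th index satisfying `p` (with the count-up-to-it equal to `k`). -/
lemma kth_elem {n : ℕ} (p : Fin n → Prop) [DecidablePred p] (k : ℕ) (hk : 1 ≤ k)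
    (htot : k ≤ (Finset.univ.filter p).card) :
    ∃ t : Fin n, p t ∧
      (Finset.univ.filter (fun j : Fin n => (j : ℕ) ≤ (t : ℕ) ∧ p j)).card = k := by
  set c : ℕ → ℕ := fun m => (Finset.univ.filter (fun j : Fin n => (j : ℕ) ≤ m ∧ p j)).card
    with hc
  have hn : 0 < n := by
    rcases Finset.card_pos.mp (lt_of_lt_of_le hk htot) with ⟨j, _⟩
    exact j.pos
  have hstep : ∀ m, c (m + 1) ≤ c m + 1 := by
    intro m
    have hsub : (Finset.univ.filter (fun j : Fin n => (j : ℕ) ≤ m + 1 ∧ p j)) ⊆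
        (Finset.univ.filter (fun j : Fin n => (j : ℕ) ≤ m ∧ p j)) ∪
        (Finset.univ.filter (fun j : Fin n => (j : ℕ) = m + 1)) := by
      intro j hj
      simp only [Finset.mem_filter, Finset.mem_univ, true_and, Finset.mem_union] at hj ⊢
      rcases hj with ⟨h1, h2⟩
      by_cases h : (j : ℕ) = m + 1
      · exact Or.inr h
      · exact Or.inl ⟨by omega, h2⟩
    calc c (m + 1) ≤ _ := Finset.card_le_card hsub
      _ ≤ _ + _ := Finset.card_union_le _ _
      _ ≤ c m + 1 := by
        gcongr
        apply Finset.card_le_one.mpr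
        intro a ha b hb
        simp only [Finset.mem_filter] at ha hb
        exact Fin.ext (ha.2.trans hb.2.symm)
  have htop : k ≤ c (n - 1) := by
    refine le_trans htot (Finset.card_le_card ?_)
    intro j hj
    simp only [Finset.mem_filter, Finset.mem_univ, true_and] at hj ⊢
    exact ⟨by omega, hj⟩
  have hex : ∃ m, k ≤ c m := ⟨n - 1, htop⟩
  set t₀ := Nat.find hex with ht₀
  have ht₀le : t₀ ≤ n - 1 := Nat.find_min' hex htop
  have ht₀k : k ≤ c t₀ := Nat.find_spec hex
  have hckt : c t₀ = k ∧ ∃ j : Fin n, (j : ℕ) = t₀ ∧ p j := by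
    rcases Nat.eq_zero_or_pos t₀ with h0 | hpos
    · have hle1 : c 0 ≤ 1 := by
        apply Finset.card_le_one.mpr
        intro a ha b hb
        simp only [Finset.mem_filter] at ha hb
        exact Fin.ext (by omega)
      rw [h0] at ht₀k ⊢
      have hco : c 0 = k := by omega
      refine ⟨hco, ?_⟩
      have : (Finset.univ.filter (fun j : Fin n => (j : ℕ) ≤ 0 ∧ p j)).Nonempty :=
        Finset.card_pos.mp (show 0 < c 0 by omega)
      rcases this with ⟨j, hj⟩
      simp only [Finset.mem_filter, Finset.mem_univ, true_and] at hj
      exact ⟨j, by omega, hj.2⟩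
    · obtain ⟨u, hu⟩ := Nat.exists_eq_add_of_lt hpos
      have hu' : t₀ = u + 1 := by omega
      have hcu : c u < k := by
        have := Nat.find_min hex (m := u) (by omega)
        omega
      have hck : c t₀ = k := by
        have := hstep u
        rw [← hu'] at this
        omega
      refine ⟨hck, ?_⟩
      have hsub : (Finset.univ.filter (fun j : Fin n => (j : ℕ) ≤ u ∧ p j)) ⊆
          (Finset.univ.filter (fun j : Fin n => (j : ℕ) ≤ t₀ ∧ p j)) := by
        intro j hj
        simp only [Finset.mem_filter, Finset.mem_univ, true_and] at hj ⊢
        exact ⟨by omega, hj.2⟩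
      have hne : (Finset.univ.filter (fun j : Fin n => (j : ℕ) ≤ u ∧ p j)) ≠
          (Finset.univ.filter (fun j : Fin n => (j : ℕ) ≤ t₀ ∧ p j)) := by
        intro h
        rw [show c u = c t₀ from by rw [hc]; simp only []; rw [hu'] at h ⊢; rw [h]] at hcu
        omega
      obtain ⟨j, hj1, hj2⟩ := Finset.exists_of_ssubset ⟨hsub, fun h => hne
        (Finset.Subset.antisymm hsub h)⟩
      simp only [Finset.mem_filter, Finset.mem_univ, true_and] at hj1 hj2
      push_neg at hj2
      refine ⟨j, ?_, hj1.2⟩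
      by_contra hne'
      exact absurd hj1.2 (hj2 (by omega))
  obtain ⟨hck, j, hjval, hjp⟩ := hckt
  exact ⟨j, hjp, by rw [hjval]; exact hck⟩
/-- the canonical `ε` with prefix `x` up to `t` and constant tail `!(x t)`. -/
def mkEps {s : ℕ} (x : Fin (s - 1) → Bool) (t : Fin (s - 1)) : Fin s → Bool :=
  fun i => if h : (i : ℕ) ≤ (t : ℕ) then x ⟨(i : ℕ), lt_of_le_of_lt h t.isLt⟩ else !(x t)

lemma mkEps_le {s : ℕ} (x : Fin (s - 1) → Bool) (t : Fin (s - 1)) (i : Fin s)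
    (h : (i : ℕ) ≤ (t : ℕ)) : mkEps x t i = x ⟨(i : ℕ), lt_of_le_of_lt h t.isLt⟩ :=
  dif_pos h

lemma mkEps_gt {s : ℕ} (x : Fin (s - 1) → Bool) (t : Fin (s - 1)) (i : Fin s)
    (h : (t : ℕ) < (i : ℕ)) : mkEps x t i = !(x t) :=
  dif_neg (by omega)

lemma mkEps_tIdx {s : ℕ} (hs : 1 < s) (x : Fin (s - 1) → Bool) (t : Fin (s - 1)) :
    tIdx (mkEps x t) = (t : ℕ) := by
  have hts : (t : ℕ) < s - 1 := t.isLt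
  have hmem : (t : ℕ) ∈ {i : ℕ | ∃ h : i < s, ∃ h' : s - 1 < s,
      mkEps x t ⟨i, h⟩ ≠ mkEps x t ⟨s - 1, h'⟩} := by
    refine ⟨by omega, by omega, ?_⟩
    have e1 : mkEps x t ⟨(t : ℕ), by omega⟩ = x t := mkEps_le x t ⟨(t : ℕ), by omega⟩ le_rfl
    have e2 : mkEps x t ⟨s - 1, by omega⟩ = !(x t) :=
      mkEps_gt x t ⟨s - 1, by omega⟩ (show (t : ℕ) < s - 1 from hts)
    rw [e1, e2]; cases x t <;> simp
  apply le_antisymm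
  · apply csSup_le ⟨(t : ℕ), hmem⟩
    rintro i ⟨h, h', hd⟩
    by_contra hc
    push_neg at hc
    apply hd
    rw [mkEps_gt x t ⟨i, h⟩ hc, mkEps_gt x t ⟨s - 1, h'⟩ (show (t : ℕ) < s - 1 from hts)]
  · exact le_csSup (tIdx_bdd _) hmem

lemma mkEps_memA {s : ℕ} (hs : 1 < s) (x : Fin (s - 1) → Bool) (t : Fin (s - 1)) :
    x ∈ Aset (mkEps x t) := by
  intro j hj
  rw [mkEps_tIdx hs] at hj
  exact (mkEps_le x t ⟨(j : ℕ), by omega⟩ hj).symm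

lemma card_cast {s : ℕ} (x : Fin (s - 1) → Bool) (t : Fin (s - 1)) :
    (Finset.univ.filter fun i : Fin s => (i : ℕ) ≤ (t : ℕ) ∧ mkEps x t i = true).card =
    (Finset.univ.filter fun j : Fin (s - 1) => (j : ℕ) ≤ (t : ℕ) ∧ x j = true).card := by
  have hts : (t : ℕ) < s - 1 := t.isLt
  apply Finset.card_bij (fun (i : Fin s) (hi : i ∈ _) =>
    (⟨(i : ℕ), lt_of_le_of_lt (Finset.mem_filter.mp hi).2.1 t.isLt⟩ : Fin (s - 1)))
  · intro i hi
    obtain ⟨-, hle, hval⟩ := Finset.mem_filter.mp hi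
    simp only [Finset.mem_filter, Finset.mem_univ, true_and]
    refine ⟨hle, ?_⟩
    rw [← mkEps_le x t i hle]
    exact hval
  · intro a ha b hb h
    have hv : (a : ℕ) = (b : ℕ) := by simpa [Fin.mk.injEq] using h
    exact Fin.ext hv
  · intro j hj
    obtain ⟨-, hle, hval⟩ := Finset.mem_filter.mp hj
    refine ⟨⟨(j : ℕ), by omega⟩, ?_, rfl⟩
    simp only [Finset.mem_filter, Finset.mem_univ, true_and]
    refine ⟨hle, ?_⟩
    rw [mkEps_le x t ⟨(j : ℕ), by omega⟩ hle]
    exact hval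

lemma wt_mkEps_true {s : ℕ} (x : Fin (s - 1) → Bool) (t : Fin (s - 1)) (hxt : x t = true) :
    wt (mkEps x t) =
      (Finset.univ.filter fun j : Fin (s - 1) => (j : ℕ) ≤ (t : ℕ) ∧ x j = true).card := by
  unfold wt
  have heq : Finset.univ.filter (fun i : Fin s => mkEps x t i = true) =
      Finset.univ.filter (fun i : Fin s => (i : ℕ) ≤ (t : ℕ) ∧ mkEps x t i = true) := by
    ext i
    simp only [Finset.mem_filter, Finset.mem_univ, true_and]
    constructor
    · intro h
      refine ⟨?_, h⟩
      by_contra hc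
      push_neg at hc
      rw [mkEps_gt x t i hc, hxt] at h
      simp at h
    · exact fun h => h.2
  rw [heq, card_cast]

lemma wt_mkEps_false {s : ℕ} (x : Fin (s - 1) → Bool) (t : Fin (s - 1)) (hxt : x t = false) :
    wt (mkEps x t) =
      (Finset.univ.filter fun j : Fin (s - 1) => (j : ℕ) ≤ (t : ℕ) ∧ x j = true).card
        + (s - 1 - (t : ℕ)) := by
  have hts : (t : ℕ) < s - 1 := t.isLt
  unfold wt
  rw [← Finset.card_filter_add_card_filter_not
    (s := Finset.univ.filter (fun i : Fin s => mkEps x t i = true))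
    (p := fun i : Fin s => (i : ℕ) ≤ (t : ℕ))]
  congr 1
  · rw [Finset.filter_filter, ← card_cast x t]
    congr 1
    ext i
    simp only [Finset.mem_filter, Finset.mem_univ, true_and]
    tauto
  · have h1 : (Finset.univ.filter (fun i : Fin s => mkEps x t i = true)).filter
        (fun i : Fin s => ¬ (i : ℕ) ≤ (t : ℕ)) =
        Finset.univ.filter (fun i : Fin s => ¬ (i : ℕ) ≤ (t : ℕ)) := by
      rw [Finset.filter_filter]
      ext i
      simp only [Finset.mem_filter, Finset.mem_univ, true_and]
      constructor
      · exact fun h => h.2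
      · intro h
        refine ⟨?_, h⟩
        rw [mkEps_gt x t i (by omega), hxt]
        rfl
    rw [h1]
    have h2 : (Finset.univ.filter (fun i : Fin s => (i : ℕ) ≤ (t : ℕ))).card = (t : ℕ) + 1 := by
      have : Finset.univ.filter (fun i : Fin s => (i : ℕ) ≤ (t : ℕ)) =
          Finset.Iic (⟨(t : ℕ), by omega⟩ : Fin s) := by
        ext i
        simp only [Finset.mem_filter, Finset.mem_univ, true_and, Finset.mem_Iic, Fin.le_def]
      rw [this, Fin.card_Iic]
    have h3 := Finset.card_filter_add_card_filter_not
      (s := (Finset.univ : Finset (Fin s))) (p := fun i : Fin s => (i : ℕ) ≤ (t : ℕ))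
    rw [Finset.card_univ, Fintype.card_fin] at h3
    omega

lemma exists_eps {s k : ℕ} (hs : 1 < s) (hk1 : 1 ≤ k) (hk2 : k ≤ s - 1)
    (x : Fin (s - 1) → Bool) : ∃ ε : Fin s → Bool, wt ε = k ∧ x ∈ Aset ε := by
  have hsplit : ∀ t : Fin (s - 1),
      (Finset.univ.filter fun j : Fin (s - 1) => (j : ℕ) ≤ (t : ℕ) ∧ x j = true).card
      + (Finset.univ.filter fun j : Fin (s - 1) => (j : ℕ) ≤ (t : ℕ) ∧ x j = false).card
      = (t : ℕ) + 1 := by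
    intro t
    have h3 := Finset.card_filter_add_card_filter_not
      (s := Finset.univ.filter (fun j : Fin (s - 1) => (j : ℕ) ≤ (t : ℕ)))
      (p := fun j : Fin (s - 1) => x j = true)
    rw [Finset.filter_filter, Finset.filter_filter] at h3
    have h2 : (Finset.univ.filter (fun j : Fin (s - 1) => (j : ℕ) ≤ (t : ℕ))).card
        = (t : ℕ) + 1 := by
      have : Finset.univ.filter (fun j : Fin (s - 1) => (j : ℕ) ≤ (t : ℕ)) = Finset.Iic t := by
        ext j
        simp only [Finset.mem_filter, Finset.mem_univ, true_and, Finset.mem_Iic, Fin.le_def]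
      rw [this, Fin.card_Iic]
    rw [h2] at h3
    have hcg : Finset.univ.filter (fun j : Fin (s - 1) => (j : ℕ) ≤ (t : ℕ) ∧ x j = false) =
        Finset.univ.filter (fun j : Fin (s - 1) => (j : ℕ) ≤ (t : ℕ) ∧ ¬ x j = true) := by
      apply Finset.filter_congr
      intro j _
      simp
    rw [hcg]
    exact h3
  by_cases hm : k ≤ wt x
  · obtain ⟨t, hpt, hcnt⟩ := kth_elem (fun j : Fin (s - 1) => x j = true) k hk1 hm
    exact ⟨mkEps x t, by rw [wt_mkEps_true x t hpt]; exact hcnt, mkEps_memA hs x t⟩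
  · push_neg at hm
    have htotf : s - k ≤ (Finset.univ.filter (fun j : Fin (s - 1) => x j = false)).card := by
      have h3 := Finset.card_filter_add_card_filter_not
        (s := (Finset.univ : Finset (Fin (s - 1))))
        (p := fun j : Fin (s - 1) => x j = true)
      have hcg : Finset.univ.filter (fun j : Fin (s - 1) => ¬ x j = true) =
          Finset.univ.filter (fun j : Fin (s - 1) => x j = false) := by
        apply Finset.filter_congr
        intro j _
        simp
      rw [hcg, Finset.card_univ, Fintype.card_fin] at h3
      have hwx : (Finset.univ.filter (fun j : Fin (s - 1) => x j = true)).card = wt x := rfl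
      omega
    obtain ⟨t, hpt, hcnt⟩ := kth_elem (fun j : Fin (s - 1) => x j = false) (s - k)
      (by omega) htotf
    refine ⟨mkEps x t, ?_, mkEps_memA hs x t⟩
    rw [wt_mkEps_false x t hpt]
    have := hsplit t
    have hts : (t : ℕ) < s - 1 := t.isLt
    omega
/-- Let `s > 1` and `k ∈ {1,…,s-1}`. The indexed family
`{A_ε : ε ∈ I^s, |ε| = k}` defines a partition of `I^{s-1}`: the sets `A_ε` with
`|ε| = k` are pairwise disjoint and their union is all of `I^{s-1}`. -/
theorem Aset_partition (s k : ℕ) (hs : 1 < s) (hk1 : 1 ≤ k) (hk2 : k ≤ s - 1) :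
    (∀ ε γ : Fin s → Bool, wt ε = k → wt γ = k → ε ≠ γ → Aset ε ∩ Aset γ = ∅) ∧
    (⋃ ε ∈ {ε : Fin s → Bool | wt ε = k}, Aset ε) = Set.univ := by
  constructor
  · intro ε γ hε hγ hne
    rw [Set.eq_empty_iff_forall_notMem]
    intro x hx
    obtain ⟨hxε, hxγ⟩ := hx
    rcases le_total (tIdx ε) (tIdx γ) with h | h
    · exact hne (eq_of_common hs hk1 hk2 ε γ hε hγ h x hxε hxγ)
    · exact hne (eq_of_common hs hk1 hk2 γ ε hγ hε h x hxγ hxε).symm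
  · ext x
    simp only [Set.mem_iUnion, Set.mem_univ, iff_true, Set.mem_setOf_eq]
    obtain ⟨ε, hw, hm⟩ := exists_eps hs hk1 hk2 x
    exact ⟨ε, hw, hm⟩
end

section
/- Let d be even, let s be a positive integer with 2s ≤ d, and let k ∈ {1, 2, …, s-1}. Then the indexed family {B_ε : ε ∈ I^s, |ε| = k} defines a partition of X_k; that is, the sets B_ε with |ε| = k are pairwise disjoint (for distinct indices ε) and their union is X_k. -/
/-!
For `y ∈ I^m`, the nonconstant `ε ∈ I^(m+1)` with `y ∈ A_ε` are exactly the strings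
`flipExtend y t = (y_0, …, y_t, ¬y_t, …, ¬y_t)` for `t < m`, because `t(flipExtend y t) = t`.
For `t < t'` these two strings agree up to position `t` and the first is constant after it, so
they are comparable and distinct, hence of different weights. Their `m` weights are therefore
exactly `1, …, m`: for each `1 ≤ k ≤ m` a unique `ε` of weight `k` has `y ∈ A_ε`, and applied
to the last `s - 1` coordinates of `x ∈ X_k` this is the partition property.
-/

lemma wt_strictMono {n : ℕ} : StrictMono (wt : (Fin n → Bool) → ℕ) := by
  intro x y hxy
  obtain ⟨hle, i, hi⟩ := Pi.lt_def.1 hxy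
  refine Finset.card_lt_card ((Finset.ssubset_iff_of_subset fun j hj => ?_).2 ⟨i, ?_, ?_⟩)
  · simp only [Finset.mem_filter, Finset.mem_univ, true_and] at hj ⊢
    exact top_le_iff.1 (by simpa [hj] using hle j)
  · simpa using (Bool.lt_iff.1 hi).2
  · simpa using (Bool.lt_iff.1 hi).1

@[simp] lemma wt_false {n : ℕ} : wt (fun _ : Fin n => false) = 0 := by simp [wt]

@[simp] lemma wt_true {n : ℕ} : wt (fun _ : Fin n => true) = n := by simp [wt]

lemma wt_pos_and_lt_of_ne {n : ℕ} {ε : Fin n → Bool} {i j : Fin n} (h : ε i ≠ ε j) :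
    0 < wt ε ∧ wt ε < n := by
  wlog hi : ε i = false generalizing i j
  · exact this h.symm (by revert h hi; cases ε i <;> cases ε j <;> simp)
  have hj : ε j = true := by rw [hi] at h; simpa using h.symm
  constructor
  · simpa using wt_strictMono (Pi.lt_def.2 ⟨fun _ => Bool.false_le _, j, by simp [hj]⟩)
  · simpa using wt_strictMono (Pi.lt_def.2 ⟨fun _ => Bool.le_true _, i, by simp [hi]⟩)

lemma exists_ne_last_of_wt {m : ℕ} {ε : Fin (m + 1) → Bool} (h0 : 0 < wt ε)
    (hm : wt ε ≤ m) : ∃ i, ε i ≠ ε (Fin.last m) := by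
  by_contra! hconst
  obtain ⟨b, rfl⟩ : ∃ b, ε = fun _ => b := ⟨_, funext hconst⟩
  cases b <;> simp at h0 hm

lemma Bset_eq_of_wt {d s : ℕ} {ε : Fin s → Bool} (h0 : 0 < wt ε) (hs : wt ε < s) :
    Bset d ε = Xk d s (wt ε) ∩ {x | suffix (s - 1) x ∈ Aset ε} := by
  have hα : ε ≠ fun _ => false := by rintro rfl; simp at h0
  have hω : ε ≠ fun _ => true := by rintro rfl; simp at hs
  rw [Bset, if_neg hα, if_neg hω]

section tIdx

variable {m : ℕ} {ε : Fin (m + 1) → Bool}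

lemma tIdx_eq {t : Fin (m + 1)} (ht : ε t ≠ ε (Fin.last m))
    (hafter : ∀ j : Fin (m + 1), t < j → ε j = ε (Fin.last m)) : tIdx ε = t := by
  refine le_antisymm (csSup_le ⟨t, t.isLt, by omega, ht⟩ fun i hi => ?_)
    (le_csSup ⟨t, fun i hi => ?_⟩ ⟨t.isLt, by omega, ht⟩) <;>
  · obtain ⟨hi, _, hne⟩ := hi
    by_contra! hlt
    exact hne (hafter ⟨i, hi⟩ hlt)

lemma exists_tIdx_eq (h : ∃ i, ε i ≠ ε (Fin.last m)) :
    ∃ t : Fin m, tIdx ε = t ∧ ε t.castSucc ≠ ε (Fin.last m) ∧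
      ∀ j : Fin (m + 1), (t : ℕ) < j → ε j = ε (Fin.last m) := by
  obtain ⟨i, hi⟩ := h
  set S := {i : ℕ | ∃ h : i < m + 1, ∃ h' : m + 1 - 1 < m + 1,
    ε ⟨i, h⟩ ≠ ε ⟨m + 1 - 1, h'⟩}
  have hbdd : BddAbove S := ⟨m + 1, fun i hi => hi.1.le⟩
  obtain ⟨hlt, _, hne⟩ : tIdx ε ∈ S := Nat.sSup_mem ⟨i, i.isLt, by omega, hi⟩ hbdd
  have hafter : ∀ j : Fin (m + 1), tIdx ε < j → ε j = ε (Fin.last m) := fun j hj => by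
    by_contra hj'
    exact (le_csSup hbdd ⟨j.isLt, by omega, hj'⟩).not_gt hj
  have htm : tIdx ε < m := by
    by_contra! hm
    exact hne (congrArg ε (Fin.ext (show tIdx ε = m + 1 - 1 by omega)))
  exact ⟨⟨tIdx ε, htm⟩, rfl, hne, hafter⟩

end tIdx

section flipExtend

variable {m : ℕ} (y : Fin m → Bool)

def flipExtend (t : Fin m) : Fin (m + 1) → Bool :=
  fun j => if h : (j : ℕ) ≤ t then y ⟨j, by omega⟩ else !y t

lemma flipExtend_of_le {t : Fin m} {j : Fin (m + 1)} (h : (j : ℕ) ≤ t) :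
    flipExtend y t j = y ⟨j, by omega⟩ := dif_pos h

lemma flipExtend_of_lt {t : Fin m} {j : Fin (m + 1)} (h : (t : ℕ) < j) :
    flipExtend y t j = !y t := dif_neg (by omega)

lemma flipExtend_castSucc_ne_last (t : Fin m) :
    flipExtend y t t.castSucc ≠ flipExtend y t (Fin.last m) := by
  rw [flipExtend_of_le y le_rfl, flipExtend_of_lt y t.isLt]
  simp

lemma tIdx_flipExtend (t : Fin m) : tIdx (flipExtend y t) = t :=
  tIdx_eq (flipExtend_castSucc_ne_last y t) fun j hj => by
    rw [flipExtend_of_lt y hj, flipExtend_of_lt y t.isLt]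

lemma mem_Aset_flipExtend (t : Fin m) : y ∈ Aset (flipExtend y t) := by
  intro j hj
  rw [tIdx_flipExtend] at hj
  exact (flipExtend_of_le y (j := ⟨j, by omega⟩) hj).symm

lemma eq_flipExtend_of_mem_Aset {ε : Fin (m + 1) → Bool} (hε : ∃ i, ε i ≠ ε (Fin.last m))
    (hy : y ∈ Aset ε) : ∃ t, ε = flipExtend y t := by
  obtain ⟨t, ht, hne, hafter⟩ := exists_tIdx_eq hε
  have hyε : ∀ j : Fin m, j ≤ t → y j = ε j.castSucc := fun j hj => hy j (ht ▸ hj)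
  refine ⟨t, funext fun j => ?_⟩
  rcases le_or_gt (j : ℕ) (t : ℕ) with hj | hj
  · rw [flipExtend_of_le y hj]
    exact (hyε ⟨j, by omega⟩ hj).symm
  · rw [flipExtend_of_lt y hj, hafter j hj, hyε t le_rfl]
    exact Bool.eq_not.2 hne.symm

lemma flipExtend_le_flipExtend_of_true {t t' : Fin m} (htt' : t ≤ t') (hyt : y t = true) :
    flipExtend y t ≤ flipExtend y t' := by
  intro j
  rcases le_or_gt (j : ℕ) t with hj | hj
  · rw [flipExtend_of_le y hj, flipExtend_of_le y (hj.trans htt')]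
  · simp [flipExtend_of_lt y hj, hyt]

lemma flipExtend_le_flipExtend_of_false {t t' : Fin m} (htt' : t ≤ t') (hyt : y t = false) :
    flipExtend y t' ≤ flipExtend y t := by
  intro j
  rcases le_or_gt (j : ℕ) t with hj | hj
  · rw [flipExtend_of_le y hj, flipExtend_of_le y (hj.trans htt')]
  · simp [flipExtend_of_lt y hj, hyt]

lemma wt_flipExtend_injective : Function.Injective fun t => wt (flipExtend y t) := by
  refine .of_lt_imp_ne fun t t' htt' => ?_
  have hne : flipExtend y t ≠ flipExtend y t' := fun h =>
    htt'.ne (Fin.ext (by simpa [tIdx_flipExtend] using congrArg tIdx h))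
  cases hyt : y t
  · exact (wt_strictMono ((flipExtend_le_flipExtend_of_false y htt'.le hyt).lt_of_ne
      hne.symm)).ne'
  · exact (wt_strictMono ((flipExtend_le_flipExtend_of_true y htt'.le hyt).lt_of_ne hne)).ne

lemma exists_wt_flipExtend_eq {k : ℕ} (hk1 : 1 ≤ k) (hk2 : k ≤ m) :
    ∃ t, wt (flipExtend y t) = k := by
  have hsub : Finset.univ.image (fun t => wt (flipExtend y t)) ⊆ Finset.Icc 1 m := by
    intro w hw
    obtain ⟨t, -, rfl⟩ := Finset.mem_image.1 hw
    have := wt_pos_and_lt_of_ne (flipExtend_castSucc_ne_last y t)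
    simp only [Finset.mem_Icc]
    omega
  have heq := Finset.eq_of_subset_of_card_le hsub (by
    rw [Finset.card_image_of_injective _ (wt_flipExtend_injective y)]
    simp)
  obtain ⟨t, -, ht⟩ := Finset.mem_image.1 (heq.symm ▸ Finset.mem_Icc.2 ⟨hk1, hk2⟩)
  exact ⟨t, ht⟩

end flipExtend

lemma existsUnique_wt_eq_and_mem_Aset {m k : ℕ} (y : Fin m → Bool) (hk1 : 1 ≤ k)
    (hk2 : k ≤ m) : ∃! ε : Fin (m + 1) → Bool, wt ε = k ∧ y ∈ Aset ε := by
  obtain ⟨t, ht⟩ := exists_wt_flipExtend_eq y hk1 hk2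
  refine ⟨flipExtend y t, ⟨ht, mem_Aset_flipExtend y t⟩, fun ε ⟨hε, hy⟩ => ?_⟩
  obtain ⟨t', rfl⟩ := eq_flipExtend_of_mem_Aset y (exists_ne_last_of_wt (by omega) (by omega)) hy
  rw [wt_flipExtend_injective y (hε.trans ht.symm)]

theorem Bset_partition_general (d s k : ℕ) (hk1 : 1 ≤ k) (hk2 : k ≤ s - 1) :
    (∀ ε γ : Fin s → Bool, wt ε = k → wt γ = k → ε ≠ γ → Bset d ε ∩ Bset d γ = ∅) ∧
    (⋃ ε ∈ {ε : Fin s → Bool | wt ε = k}, Bset d ε) = Xk d s k := by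
  obtain ⟨m, rfl⟩ : ∃ m, s = m + 1 := ⟨s - 1, by omega⟩
  have hB : ∀ ε : Fin (m + 1) → Bool, wt ε = k →
      Bset d ε = Xk d (m + 1) k ∩ {x | suffix (m + 1 - 1) x ∈ Aset ε} :=
    fun ε hε => hε ▸ Bset_eq_of_wt (by omega) (by omega)
  have huniq := fun x : Fin (d - (m + 1)) → Bool =>
    existsUnique_wt_eq_and_mem_Aset (suffix (m + 1 - 1) x) hk1 hk2
  constructor
  · intro ε γ hε hγ hne
    refine Set.eq_empty_of_forall_notMem fun x ⟨hxε, hxγ⟩ => hne ?_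
    rw [hB ε hε] at hxε
    rw [hB γ hγ] at hxγ
    exact (huniq x).unique ⟨hε, hxε.2⟩ ⟨hγ, hxγ.2⟩
  · ext x
    simp only [Set.mem_iUnion, Set.mem_ofPred_eq, exists_prop]
    refine ⟨fun ⟨ε, hε, hx⟩ => (hB ε hε ▸ hx).1, fun hx => ?_⟩
    obtain ⟨ε, ⟨hε, hA⟩, -⟩ := huniq x
    exact ⟨ε, hε, hB ε hε ▸ ⟨hx, hA⟩⟩

/-- Let `d` be even, `s` positive with `2s ≤ d`, and `k ∈ {1,…,s-1}`.
The indexed family `{B_ε : ε ∈ I^s, |ε| = k}` defines a partition of `X_k`: the sets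
`B_ε` with `|ε| = k` are pairwise disjoint and their union is `X_k`. -/
theorem Bset_partition (d s k : ℕ) (hde : Even d) (hs : 0 < s) (hsd : 2 * s ≤ d)
    (hk1 : 1 ≤ k) (hk2 : k ≤ s - 1) :
    (∀ ε γ : Fin s → Bool, wt ε = k → wt γ = k → ε ≠ γ → Bset d ε ∩ Bset d γ = ∅) ∧
    (⋃ ε ∈ {ε : Fin s → Bool | wt ε = k}, Bset d ε) = Xk d s k :=
  Bset_partition_general d s k hk1 hk2
end

section
/- Let d be even and s a positive integer with 2s ≤ d. Let ε and γ belong to I^s \ {α, ω}, let i = t(ε) and j = t(γ), and suppose ε_s = 0. If either (1) γ_s = 0, or (2) γ_s = 1 and j ≥ i, then for every x ∈ B_ε and y ∈ B_γ one has ⟨ε, γ⟩ ≤ ⟨x, y⟩. -/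
/-!
Since `ε_s = 0`, a common `1` of `ε` and `γ` sits at an index `k ≤ t(ε) < s - 1`, and also
`k ≤ t(γ)`: in case (1) because `γ_s = 0`, in case (2) because `t(ε) ≤ t(γ)`. Membership in
`A_ε` and `A_γ` then forces `x` and `y` to be `1` at the `k`-th of their last `s - 1`
coordinates, so shifting indices by `d - 2s + 1` injects the common support of `ε, γ` into
that of `x, y`.
-/

lemma ip_le_ip_of_shift {m n : ℕ} {x y : Fin m → Bool} {x' y' : Fin n → Bool} (c : ℕ)
    (h : ∀ i : Fin m, x i = true → y i = true →
      ∃ hi : c + i < n, x' ⟨c + i, hi⟩ = true ∧ y' ⟨c + i, hi⟩ = true) :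
    ip x y ≤ ip x' y' := by
  have hcard : ip x' y' = ((Finset.univ.filter fun j => x' j = true ∧ y' j = true).map
      Fin.valEmbedding).card := (Finset.card_map _).symm
  rw [hcard]
  refine Finset.card_le_card_of_injOn (fun i : Fin m => c + i) ?_ ?_
  · intro i hi
    simp only [Finset.coe_filter, Finset.mem_univ, true_and, Set.mem_ofPred_eq] at hi
    obtain ⟨hin, hx', hy'⟩ := h i hi.1 hi.2
    simp only [Finset.coe_map, Set.mem_image, Finset.mem_coe, Finset.mem_filter,
      Finset.mem_univ, true_and]
    exact ⟨⟨c + i, hin⟩, ⟨hx', hy'⟩, rfl⟩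
  · intro i _ j _ hij
    exact Fin.ext (Nat.add_left_cancel hij)

lemma le_tIdx_of_ne_last {s : ℕ} {ε : Fin s → Bool} (hs : s - 1 < s) (k : Fin s)
    (hk : ε k ≠ ε ⟨s - 1, hs⟩) : (k : ℕ) ≤ tIdx ε :=
  le_csSup ⟨s, fun _ ⟨hi, _⟩ => hi.le⟩ ⟨k.isLt, hs, hk⟩

lemma suffix_mem_Aset_of_mem_Bset {d s : ℕ} {ε : Fin s → Bool} {x : Fin (d - s) → Bool}
    (hα : ε ≠ fun _ => false) (hω : ε ≠ fun _ => true) (hx : x ∈ Bset d ε) :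
    suffix (s - 1) x ∈ Aset ε := by
  rw [Bset, if_neg hα, if_neg hω] at hx
  exact hx.2

lemma apply_eq_of_suffix_mem_Aset {n s : ℕ} {x : Fin n → Bool} {ε : Fin s → Bool}
    (hx : suffix (s - 1) x ∈ Aset ε) (k : Fin s) (hkt : (k : ℕ) ≤ tIdx ε)
    (hk : (k : ℕ) < s - 1) (hkn : n - (s - 1) + k < n) :
    x ⟨n - (s - 1) + k, hkn⟩ = ε k := by
  simpa [suffix, hkn] using hx ⟨k, hk⟩ hkt

theorem ip_le_of_Bset_general (d s : ℕ) (hs : 0 < s) (hsd : 2 * s ≤ d)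
    (ε γ : Fin s → Bool)
    (hεα : ε ≠ fun _ => false) (hεω : ε ≠ fun _ => true)
    (hγα : γ ≠ fun _ => false) (hγω : γ ≠ fun _ => true)
    (hεs : ε ⟨s - 1, Nat.sub_lt hs Nat.one_pos⟩ = false)
    (hcase : γ ⟨s - 1, Nat.sub_lt hs Nat.one_pos⟩ = false ∨
      (γ ⟨s - 1, Nat.sub_lt hs Nat.one_pos⟩ = true ∧ tIdx ε ≤ tIdx γ)) :
    ∀ x ∈ Bset d ε, ∀ y ∈ Bset d γ, ip ε γ ≤ ip x y := by
  intro x hx y hy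
  refine ip_le_ip_of_shift (d - s - (s - 1)) fun k hεk hγk => ?_
  have hkε : (k : ℕ) ≤ tIdx ε := le_tIdx_of_ne_last _ k (by rw [hεk, hεs]; decide)
  have hkγ : (k : ℕ) ≤ tIdx γ := by
    rcases hcase with hγs | ⟨-, hεγ⟩
    · exact le_tIdx_of_ne_last _ k (by rw [hγk, hγs]; decide)
    · exact hkε.trans hεγ
  have hk : (k : ℕ) < s - 1 := by
    refine lt_of_le_of_ne (Nat.le_sub_one_of_lt k.isLt) fun hk => ?_
    have : k = ⟨s - 1, Nat.sub_lt hs Nat.one_pos⟩ := Fin.ext hk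
    rw [this, hεs] at hεk
    exact Bool.false_ne_true hεk
  have hkn : d - s - (s - 1) + k < d - s := by omega
  refine ⟨hkn, ?_, ?_⟩
  · rw [apply_eq_of_suffix_mem_Aset (suffix_mem_Aset_of_mem_Bset hεα hεω hx) k hkε hk hkn, hεk]
  · rw [apply_eq_of_suffix_mem_Aset (suffix_mem_Aset_of_mem_Bset hγα hγω hy) k hkγ hk hkn, hγk]

/-- Let `d` be even, `s` positive with `2s ≤ d`. Let `ε, γ ∈ I^s ∖ {α, ω}`
with `ε_s = 0`. If either (1) `γ_s = 0`, or (2) `γ_s = 1` and `t(γ) ≥ t(ε)`, then for every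
`x ∈ B_ε` and `y ∈ B_γ` one has `⟨ε, γ⟩ ≤ ⟨x, y⟩`. -/
theorem ip_le_of_Bset (d s : ℕ) (hde : Even d) (hs : 0 < s) (hsd : 2 * s ≤ d)
    (ε γ : Fin s → Bool)
    (hεα : ε ≠ fun _ => false) (hεω : ε ≠ fun _ => true)
    (hγα : γ ≠ fun _ => false) (hγω : γ ≠ fun _ => true)
    (hεs : ε ⟨s - 1, Nat.sub_lt hs Nat.one_pos⟩ = false)
    (hcase : γ ⟨s - 1, Nat.sub_lt hs Nat.one_pos⟩ = false ∨
      (γ ⟨s - 1, Nat.sub_lt hs Nat.one_pos⟩ = true ∧ tIdx ε ≤ tIdx γ)) :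
    ∀ x ∈ Bset d ε, ∀ y ∈ Bset d γ, ip ε γ ≤ ip x y :=
  ip_le_of_Bset_general d s hs hsd ε γ hεα hεω hγα hγω hεs hcase
end

section
/- Let d be even and s a positive integer with 2s ≤ d. Then for every ε ∈ I^s, the antipode of B_ε equals B_{ε̄}; that is, {x̄ : x ∈ B_ε} = B_{ε̄}, where ε̄ denotes the antipode of ε. -/
/-! The antipode map `x ↦ x̄` sends weight `w` to weight `(d - s) - w` on `I^{d-s}`, and for even
`d = 2m` this exchanges the weight windows: `|x| ≤ m - s` becomes `|x̄| ≥ m`, and `|x| = m - s + k`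
becomes `|x̄| = m - s + (s - k)`. Since `|ε̄| = s - |ε|`, this matches `X_{|ε|}` with `X_{|ε̄|}`.
The prefix condition `A_ε` is preserved because `t(ε̄) = t(ε)` and complementing both `ε` and the
suffix of `x` keeps every equation `x_j = ε_j`. -/

@[simp]
lemma antipode_antipode {n : ℕ} (x : Fin n → Bool) : antipode (antipode x) = x := by
  funext i
  simp [antipode]

lemma antipode_const {n : ℕ} (b : Bool) : antipode (fun _ : Fin n => b) = fun _ => !b := rfl

lemma wt_le {n : ℕ} (x : Fin n → Bool) : wt x ≤ n := by
  simpa [wt] using Finset.card_filter_le (Finset.univ : Finset (Fin n)) _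

lemma wt_antipode {n : ℕ} (x : Fin n → Bool) : wt (antipode x) = n - wt x := by
  have h := Finset.card_filter_add_card_filter_not (s := Finset.univ) (x · = true)
  simp only [Finset.card_univ, Fintype.card_fin, Bool.not_eq_true] at h
  simp only [wt, antipode, Bool.not_eq_true']
  omega

lemma wt_const {n : ℕ} (b : Bool) : wt (fun _ : Fin n => b) = if b then n else 0 := by
  cases b <;> simp [wt]

lemma tIdx_antipode {s : ℕ} (ε : Fin s → Bool) : tIdx (antipode ε) = tIdx ε := by
  simp [tIdx, antipode]

lemma suffix_antipode {m n : ℕ} (h : m ≤ n) (x : Fin n → Bool) :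
    suffix m (antipode x) = antipode (suffix m x) := by
  funext j
  have hj : n - m + (j : ℕ) < n := by omega
  simp [suffix, antipode, hj]

lemma antipode_mem_Aset_antipode_iff {s : ℕ} (ε : Fin s → Bool) (y : Fin (s - 1) → Bool) :
    antipode y ∈ Aset (antipode ε) ↔ y ∈ Aset ε := by
  simp [Aset, tIdx_antipode, antipode]

lemma antipode_mem_Xk_sub_iff {d s k : ℕ} (hde : Even d) (hs : 0 < s) (hsd : 2 * s ≤ d)
    (hk : k ≤ s) (x : Fin (d - s) → Bool) :
    antipode x ∈ Xk d s (s - k) ↔ x ∈ Xk d s k := by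
  obtain ⟨m, rfl⟩ := hde
  have hx := wt_le x
  unfold Xk
  split_ifs <;> simp only [Set.mem_ofPred_eq, wt_antipode] <;> omega

lemma Bset_const (d : ℕ) {s : ℕ} (hs : 0 < s) (b : Bool) :
    Bset d (fun _ : Fin s => b) = Xk d s (wt (fun _ : Fin s => b)) := by
  have htf : (fun _ : Fin s => true) ≠ fun _ => false :=
    fun h => by simpa using congrFun h ⟨0, hs⟩
  cases b <;> simp [Bset, wt_const, htf]

lemma Bset_of_forall_ne_const (d : ℕ) {s : ℕ} {ε : Fin s → Bool}
    (hε : ∀ b : Bool, ε ≠ fun _ => b) :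
    Bset d ε = Xk d s (wt ε) ∩ {x | suffix (s - 1) x ∈ Aset ε} := by
  simp [Bset, hε]

lemma antipode_mem_Bset_antipode_iff {d s : ℕ} (hde : Even d) (hs : 0 < s) (hsd : 2 * s ≤ d)
    (ε : Fin s → Bool) (x : Fin (d - s) → Bool) :
    antipode x ∈ Bset d (antipode ε) ↔ x ∈ Bset d ε := by
  by_cases hconst : ∃ b : Bool, ε = fun _ => b
  · obtain ⟨b, rfl⟩ := hconst
    rw [antipode_const, Bset_const d hs, Bset_const d hs, ← antipode_const, wt_antipode]
    exact antipode_mem_Xk_sub_iff hde hs hsd (wt_le _) x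
  · push Not at hconst
    have hconst' : ∀ b : Bool, antipode ε ≠ fun _ => b := fun b h =>
      hconst (!b) (by rw [← antipode_antipode ε, h, antipode_const])
    rw [Bset_of_forall_ne_const d hconst, Bset_of_forall_ne_const d hconst', wt_antipode]
    simp only [Set.mem_inter_iff, Set.mem_ofPred_eq, suffix_antipode (by omega : s - 1 ≤ d - s),
      antipode_mem_Aset_antipode_iff, antipode_mem_Xk_sub_iff hde hs hsd (wt_le ε)]

/-- Let `d` be even and `s` positive with `2s ≤ d`. For every `ε ∈ I^s`,
the antipode of `B_ε` equals `B_{ε̄}`: `{x̄ : x ∈ B_ε} = B_{ε̄}`. -/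
theorem antipode_Bset (d s : ℕ) (hde : Even d) (hs : 0 < s) (hsd : 2 * s ≤ d)
    (ε : Fin s → Bool) :
    antipode '' Bset d ε = Bset d (antipode ε) := by
  rw [Set.image_eq_preimage_of_inverse antipode_antipode antipode_antipode]
  ext x
  simpa using antipode_mem_Bset_antipode_iff hde hs hsd (antipode ε) x
end
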